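/- arXiv:1004.1128 — 8 statements merged into one kernel-verified Lean document; each statement's English description precedes it below -/
import Mathlib

section
/- The class RTN1* is closed under multiplication by positive integers and under Cauchy product: if A(x), B(x) ∈ RTN1* and k is a positive integer, then k·A(x) ∈ RTN1* and A(x)·B(x) ∈ RTN1*. -/
/-!
Write `a`, `b` for the coefficients of `A = R(x^p)` and `B = S(x^q)` with `R, S ∈ RTN1`. The ratio
condition on `R` says exactly that `a(n + p) ~ a(n)`, and this passes to the Cauchy product
`c = a * b` as soon as every fixed term `a(j) b(n - j)` is `o(c(n))`. That holds because the
coefficients of `R` are eventually at least `1`: a window of `L` terms `a(j + pqt) b(n - j - pqt)`,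
each at least `b(n - j) / 2`, fits inside `c(n)`. By symmetry also `c(n + q) ~ c(n)`, and the steps
`h` with `c(n + h) ~ c(n)` are closed under sums and differences, so `g = gcd(p, q)` is one of
them. Since `c` is supported on `gℕ`, the series `∑ c(gm) xᵐ` lies in `RTN1`: its coefficients are
natural numbers, positive infinitely often, hence (by `c(g(m + 1)) ~ c(gm)`) eventually positive.
-/

open Filter Finset

noncomputable section

/-- `R ∈ RT1`: coefficients eventually positive and `r(n-1)/r(n) → 1`. -/
def RT1 (r : ℕ → ℝ) : Prop :=
  (∀ᶠ n in Filter.atTop, 0 < r n) ∧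
    Filter.Tendsto (fun n => r (n - 1) / r n) Filter.atTop (nhds 1)

/-- The coefficients are all natural numbers. -/
def IsNatSeries (r : ℕ → ℝ) : Prop := ∀ n, ∃ k : ℕ, r n = (k : ℝ)

/-- Members of `RT1` with natural-number coefficients. -/
def RTN1 (r : ℕ → ℝ) : Prop := RT1 r ∧ IsNatSeries r

/-- Coefficient sequence of `R(x^d)`. -/
def substPow (d : ℕ) (r : ℕ → ℝ) : ℕ → ℝ := fun n => if d ∣ n then r (n / d) else 0

/-- Cauchy product of coefficient sequences. -/
def cauchy (a b : ℕ → ℝ) : ℕ → ℝ := fun n => ∑ j ∈ Finset.range (n + 1), a j * b (n - j)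

/-- `RTN1* = ⋃_{d ≥ 1} { R(x^d) : R ∈ RTN1 }`. -/
def RTN1star (a : ℕ → ℝ) : Prop := ∃ d : ℕ, 1 ≤ d ∧ ∃ r : ℕ → ℝ, RTN1 r ∧ a = substPow d r

open Asymptotics

/-- Unlike `u (n + h) / u n → 1`, this is meaningful for sequences supported on an arithmetic
progression, such as the coefficients of `R(x^d)`. -/
def ShiftEquivalent (h : ℕ) (u : ℕ → ℝ) : Prop := (fun n => u (n + h)) ~[atTop] u

namespace ShiftEquivalent

variable {u : ℕ → ℝ} {h h₁ h₂ : ℕ}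

theorem zero (u : ℕ → ℝ) : ShiftEquivalent 0 u := IsEquivalent.refl

theorem comp_add (hu : ShiftEquivalent h u) (k : ℕ) :
    (fun n => u (n + k + h)) ~[atTop] fun n => u (n + k) :=
  hu.comp_tendsto (tendsto_add_atTop_nat k)

theorem add (hu₁ : ShiftEquivalent h₁ u) (hu₂ : ShiftEquivalent h₂ u) :
    ShiftEquivalent (h₁ + h₂) u := by
  have hsum := (hu₁.comp_add h₂).trans hu₂
  simpa only [ShiftEquivalent, add_comm h₁ h₂, ← add_assoc] using hsum

theorem of_add (hu : ShiftEquivalent (h₁ + h₂) u) (hu₁ : ShiftEquivalent h₁ u) :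
    ShiftEquivalent h₂ u := by
  have hback := (hu₁.comp_add h₂).symm
  simp only [add_assoc, add_comm h₂ h₁] at hback
  exact hback.trans hu

theorem mul (hu : ShiftEquivalent h u) (t : ℕ) : ShiftEquivalent (h * t) u := by
  induction t with
  | zero => exact zero u
  | succ t ih => exact ih.add hu

theorem gcd {p q : ℕ} (hp : ShiftEquivalent p u) (hq : ShiftEquivalent q u) :
    ShiftEquivalent (Nat.gcd p q) u := by
  induction p, q using Nat.gcd.induction with
  | H0 n => simpa using hq
  | H1 m n _ ih =>
    rw [Nat.gcd_rec]
    refine ih ?_ hp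
    rw [← Nat.div_add_mod n m] at hq
    exact hq.of_add (hp.mul _)

theorem comp_mul {g : ℕ} (hu : ShiftEquivalent (g * h) u) (hg : 0 < g) :
    ShiftEquivalent h fun m => u (g * m) := by
  have hcomp := hu.comp_tendsto (tendsto_id.const_mul_atTop' hg)
  simpa only [ShiftEquivalent, Function.comp_def, id, mul_add] using hcomp

theorem eventually_pos (hu : ShiftEquivalent 1 u) (hfreq : ∃ᶠ n in atTop, 0 < u n) :
    ∀ᶠ n in atTop, 0 < u n := by
  obtain ⟨φ, hφ, heq⟩ := hu.exists_pos_eq_mul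
  obtain ⟨N, hN⟩ := eventually_atTop.mp (hφ.and heq)
  obtain ⟨n₀, hn₀N, hn₀⟩ := (frequently_atTop.mp hfreq) N
  refine eventually_atTop.mpr ⟨n₀, fun n hn => ?_⟩
  induction n, hn using Nat.le_induction with
  | base => exact hn₀
  | succ n hn ih =>
    obtain ⟨hφn, hun⟩ := hN n (hn₀N.trans hn)
    have hun' : u (n + 1) = φ n * u n := hun
    exact hun' ▸ mul_pos hφn ih

theorem eventually_le_two_mul (hu : ShiftEquivalent h u) (hu0 : 0 ≤ u) :
    ∀ᶠ n in atTop, u (n + h) ≤ 2 * u n := by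
  filter_upwards [hu.isLittleO.def one_pos] with n hn
  have hun : 0 ≤ u n := hu0 n
  rw [Pi.sub_apply, one_mul, Real.norm_of_nonneg hun, Real.norm_eq_abs, abs_le] at hn
  linarith [hn.2]

end ShiftEquivalent

theorem rt1_iff {r : ℕ → ℝ} :
    RT1 r ↔ (∀ᶠ n in atTop, 0 < r n) ∧ ShiftEquivalent 1 r := by
  refine and_congr_right fun hpos => ⟨fun hr => ?_, fun hr => ?_⟩
  · refine (isEquivalent_of_tendsto_one (u := r) ?_).symm
    simpa only [Pi.div_def, Function.comp_def, Nat.add_sub_cancel] using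
      hr.comp (tendsto_add_atTop_nat 1)
  · have hpred := hr.symm.comp_tendsto (tendsto_sub_atTop_nat 1)
    have hne : ∀ᶠ n in atTop, r n ≠ 0 := hpos.mono fun n hn => hn.ne'
    refine (isEquivalent_iff_tendsto_one hne).mp (hpred.congr_right ?_)
    filter_upwards [eventually_ge_atTop 1] with n hn
    simp [Nat.sub_add_cancel hn]

section substPow

variable {d : ℕ}

theorem substPow_add_self (hd : 0 < d) (r : ℕ → ℝ) (n : ℕ) :
    substPow d r (n + d) = substPow d (fun m => r (m + 1)) n := by
  simp only [substPow, Nat.dvd_add_self_right, Nat.add_div_right _ hd]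

theorem substPow_sub (u v : ℕ → ℝ) : substPow d (u - v) = substPow d u - substPow d v := by
  ext n
  simp only [substPow, Pi.sub_apply]
  split_ifs <;> simp

theorem Asymptotics.IsLittleO.substPow {f g : ℕ → ℝ} (h : f =o[atTop] g) (hd : 0 < d) :
    substPow d f =o[atTop] substPow d g := by
  refine IsLittleO.of_bound fun c hc => ?_
  obtain ⟨N, hN⟩ := eventually_atTop.mp (h.def hc)
  filter_upwards [eventually_ge_atTop (d * N)] with n hn
  unfold _root_.substPow
  split_ifs
  · exact hN _ ((Nat.le_div_iff_mul_le hd).mpr (by linarith [mul_comm d N]))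
  · simp

theorem Asymptotics.IsEquivalent.substPow {u v : ℕ → ℝ} (h : u ~[atTop] v) (hd : 0 < d) :
    substPow d u ~[atTop] substPow d v := by
  rw [IsEquivalent, ← substPow_sub]
  exact h.isLittleO.substPow hd

theorem ShiftEquivalent.substPow {r : ℕ → ℝ} (hr : ShiftEquivalent 1 r) (hd : 0 < d) :
    ShiftEquivalent d (substPow d r) := by
  simp only [ShiftEquivalent, substPow_add_self hd]
  exact IsEquivalent.substPow hr hd

end substPow

theorem Asymptotics.isEquivalent_of_sub_isLittleO_add {α : Type*} {l : Filter α}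
    {u v : α → ℝ} (hu : 0 ≤ u) (hv : 0 ≤ v) (h : (u - v) =o[l] (u + v)) : u ~[l] v := by
  refine h.trans_isBigO (IsBigO.of_bound 4 ?_)
  filter_upwards [h.def (by norm_num : (0 : ℝ) < 1 / 2)] with x hx
  have hux := hu x
  have hvx := hv x
  simp only [Pi.sub_apply, Pi.add_apply, Real.norm_eq_abs, abs_le, abs_of_nonneg hvx,
    abs_of_nonneg (add_nonneg hux hvx)] at hx ⊢
  linarith [hx.2]

section cauchy

variable {a b : ℕ → ℝ}

theorem cauchy_comm (a b : ℕ → ℝ) : cauchy a b = cauchy b a := by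
  ext n
  rw [cauchy, cauchy, ← sum_range_reflect]
  refine sum_congr rfl fun j hj => ?_
  rw [mul_comm, Nat.add_sub_cancel, Nat.sub_sub_self (mem_range_succ_iff.mp hj)]

theorem cauchy_sub_left (f g b : ℕ → ℝ) : cauchy (f - g) b = cauchy f b - cauchy g b := by
  ext n
  simp only [cauchy, Pi.sub_apply, sub_mul, sum_sub_distrib]

theorem cauchy_apply_add (a b : ℕ → ℝ) (n p : ℕ) :
    cauchy a b (n + p) =
      ∑ j ∈ range p, a j * b (n + p - j) + cauchy (fun j => a (j + p)) b n := by
  rw [cauchy, cauchy, show n + p + 1 = p + (n + 1) by omega, sum_range_add]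
  congr 1
  refine sum_congr rfl fun j _ => ?_
  rw [add_comm p j, Nat.add_sub_add_right]

theorem cauchy_nonneg (ha : 0 ≤ a) (hb : 0 ≤ b) : 0 ≤ cauchy a b := fun _ =>
  sum_nonneg fun j _ => mul_nonneg (ha j) (hb _)

theorem sum_le_cauchy (ha : 0 ≤ a) (hb : 0 ≤ b) {n : ℕ} {s : Finset ℕ}
    (hs : s ⊆ range (n + 1)) :
    ∑ j ∈ s, a j * b (n - j) ≤ cauchy a b n :=
  sum_le_sum_of_subset_of_nonneg hs fun j _ _ => mul_nonneg (ha j) (hb _)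

theorem Asymptotics.IsLittleO.cauchy_left {d w : ℕ → ℝ} (ha : 0 ≤ a) (hb : 0 ≤ b)
    (hd : d =o[atTop] a) (hhead : ∀ j, (fun n => d j * b (n - j)) =o[atTop] w)
    (hw : cauchy a b =O[atTop] w) : cauchy d b =o[atTop] w := by
  refine IsLittleO.of_bound fun ε hε => ?_
  obtain ⟨C, hC, hCw⟩ := hw.exists_pos
  set δ := ε / (2 * C)
  obtain ⟨N, hN⟩ := eventually_atTop.mp (hd.def (by positivity : 0 < δ))
  have hH : (fun n => ∑ j ∈ range N, d j * b (n - j)) =o[atTop] w :=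
    IsLittleO.fun_sum fun j _ => hhead j
  filter_upwards [hH.def (half_pos hε), hCw.bound, eventually_ge_atTop N] with n hHn hcn hnN
  have htail : ‖∑ j ∈ Ico N (n + 1), d j * b (n - j)‖ ≤ δ * cauchy a b n := by
    calc _ ≤ ∑ j ∈ Ico N (n + 1), ‖d j * b (n - j)‖ := norm_sum_le _ _
      _ ≤ ∑ j ∈ Ico N (n + 1), δ * (a j * b (n - j)) := by
          gcongr with j hj
          have hdj := hN j (mem_Ico.mp hj).1
          rw [Real.norm_of_nonneg (ha j)] at hdj
          rw [norm_mul, Real.norm_eq_abs (b _), abs_of_nonneg (hb _), ← mul_assoc]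
          exact mul_le_mul_of_nonneg_right hdj (hb _)
      _ ≤ δ * cauchy a b n := by
          rw [← mul_sum]
          exact mul_le_mul_of_nonneg_left
            (sum_le_cauchy ha hb fun j hj => mem_range.mpr (mem_Ico.mp hj).2) (by positivity)
  rw [Real.norm_of_nonneg (cauchy_nonneg ha hb n)] at hcn
  simp only [cauchy]
  rw [← sum_range_add_sum_Ico _ (by omega : N ≤ n + 1)]
  calc _ ≤ ‖∑ j ∈ range N, d j * b (n - j)‖ + ‖∑ j ∈ Ico N (n + 1), d j * b (n - j)‖ :=
        norm_add_le _ _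
    _ ≤ ε / 2 * ‖w n‖ + δ * (C * ‖w n‖) := by gcongr; exact htail.trans (by gcongr)
    _ = ε * ‖w n‖ := by simp only [δ]; field_simp; ring

theorem ShiftEquivalent.cauchy_left {p : ℕ} (ha : 0 ≤ a) (hb : 0 ≤ b)
    (hap : ShiftEquivalent p a) (hhead : ∀ j, (fun n => a j * b (n - j)) =o[atTop] cauchy a b) :
    ShiftEquivalent p (cauchy a b) := by
  set c := cauchy a b
  have hc : 0 ≤ c := cauchy_nonneg ha hb
  set w : ℕ → ℝ := fun n => c (n + p) + c n
  have hc_w : c =O[atTop] w := IsBigO.of_bound' <| .of_forall fun n => by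
    simp only [w, Real.norm_of_nonneg (hc _), Real.norm_of_nonneg (add_nonneg (hc _) (hc _))]
    exact le_add_of_nonneg_left (hc (n + p))
  have hcp_w : (fun n => c (n + p)) =O[atTop] w := IsBigO.of_bound' <| .of_forall fun n => by
    simp only [w, Real.norm_of_nonneg (hc _), Real.norm_of_nonneg (add_nonneg (hc _) (hc _))]
    exact le_add_of_nonneg_right (hc n)
  have hshift : ∀ j, (fun n => a j * b (n + p - j)) =o[atTop] w := fun j =>
    ((hhead j).comp_tendsto (tendsto_add_atTop_nat p)).trans_isBigO hcp_w
  have htail : cauchy ((fun j => a (j + p)) - a) b =o[atTop] w := by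
    refine hap.isLittleO.cauchy_left ha hb (fun j => ?_) hc_w
    simp only [Pi.sub_apply, sub_mul]
    refine IsLittleO.sub ?_ ((hhead j).trans_isBigO hc_w)
    simpa only [Nat.add_sub_add_right] using hshift (j + p)
  refine isEquivalent_of_sub_isLittleO_add (fun n => hc (n + p)) hc ?_
  have hsplit : (fun n => c (n + p)) - c =
      (fun n => ∑ j ∈ range p, a j * b (n + p - j)) + cauchy ((fun j => a (j + p)) - a) b := by
    ext n
    simp only [c, Pi.sub_apply, Pi.add_apply, cauchy_apply_add, cauchy_sub_left]
    ring
  rw [hsplit]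
  exact (IsLittleO.fun_sum fun j _ => hshift j).add htail

theorem isLittleO_apply_sub_cauchy (ha : 0 ≤ a) (hb : 0 ≤ b) {h j : ℕ} (hh : 0 < h)
    (hbh : ShiftEquivalent h b) (haj : ∀ᶠ t in atTop, 1 ≤ a (j + h * t)) :
    (fun n => b (n - j)) =o[atTop] cauchy a b := by
  have hcmp : ∀ t, ∀ᶠ n in atTop, b (n - j) ≤ 2 * b (n - (j + h * t)) := fun t => by
    filter_upwards [(tendsto_sub_atTop_nat (j + h * t)).eventually
      ((hbh.mul t).eventually_le_two_mul hb), eventually_ge_atTop (j + h * t)] with n hn hnj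
    rwa [show n - (j + h * t) + h * t = n - j by omega] at hn
  refine IsLittleO.of_bound fun ε hε => ?_
  obtain ⟨L, hL⟩ := exists_nat_gt (2 / ε)
  obtain ⟨A, hA⟩ := eventually_atTop.mp haj
  filter_upwards [(eventually_all_finset (Ico A (A + L))).mpr fun t _ => hcmp t,
    eventually_ge_atTop (j + h * (A + L))] with n hcmpn hn
  have hwindow : ∑ t ∈ Ico A (A + L), a (j + h * t) * b (n - (j + h * t)) ≤ cauchy a b n := by
    rw [← sum_image (f := fun i => a i * b (n - i)) fun x _ y _ hxy =>
      Nat.eq_of_mul_eq_mul_left hh (Nat.add_left_cancel hxy)]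
    refine sum_le_cauchy ha hb fun i hi => ?_
    obtain ⟨t, ht, rfl⟩ := mem_image.mp hi
    have := Nat.mul_le_mul_left h (mem_Ico.mp ht).2.le
    exact mem_range.mpr (by omega)
  have hLb : (L : ℝ) * b (n - j) ≤ 2 * cauchy a b n := by
    calc (L : ℝ) * b (n - j) = ∑ t ∈ Ico A (A + L), b (n - j) := by simp
      _ ≤ ∑ t ∈ Ico A (A + L), 2 * (a (j + h * t) * b (n - (j + h * t))) := by
          gcongr with t ht
          refine (hcmpn t ht).trans (mul_le_mul_of_nonneg_left ?_ two_pos.le)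
          exact le_mul_of_one_le_left (hb _) (hA t (mem_Ico.mp ht).1)
      _ ≤ 2 * cauchy a b n := by rw [← mul_sum]; gcongr
  have hL0 : (0 : ℝ) < L := (div_pos two_pos hε).trans hL
  rw [Real.norm_of_nonneg (hb _), Real.norm_of_nonneg (cauchy_nonneg ha hb n)]
  rw [div_lt_iff₀ hε] at hL
  have hc : 0 ≤ cauchy a b n := cauchy_nonneg ha hb n
  refine le_of_mul_le_mul_left (hLb.trans ?_) hL0
  nlinarith

end cauchy

section RTN1

variable {r s : ℕ → ℝ} {p q : ℕ}

theorem IsNatSeries.nonneg (hr : IsNatSeries r) : 0 ≤ r := fun n => by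
  obtain ⟨k, hk⟩ := hr n
  exact hk ▸ k.cast_nonneg

theorem IsNatSeries.eventually_one_le (hr : IsNatSeries r) (hpos : ∀ᶠ n in atTop, 0 < r n) :
    ∀ᶠ n in atTop, 1 ≤ r n :=
  hpos.mono fun n hn => by
    obtain ⟨k, hk⟩ := hr n
    rw [hk] at hn ⊢
    exact Nat.one_le_cast.mpr (Nat.cast_pos.mp hn)

theorem IsNatSeries.cauchy (hr : IsNatSeries r) (hs : IsNatSeries s) :
    IsNatSeries (cauchy r s) := by
  choose R hR using hr
  choose S hS using hs
  exact fun n => ⟨∑ j ∈ range (n + 1), R j * S (n - j), by simp [_root_.cauchy, hR, hS]⟩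

theorem IsNatSeries.substPow (hr : IsNatSeries r) (p : ℕ) : IsNatSeries (substPow p r) :=
  fun n => by
    unfold _root_.substPow
    split_ifs
    exacts [hr _, ⟨0, Nat.cast_zero.symm⟩]

theorem substPow_nonneg (hr : 0 ≤ r) : 0 ≤ substPow p r := fun n => show 0 ≤ substPow p r n by
  unfold substPow
  split_ifs
  exacts [hr _, le_rfl]

theorem substPow_mul_self (hp : 0 < p) (r : ℕ → ℝ) (i : ℕ) :
    substPow p r (p * i) = r i := by
  rw [substPow, if_pos (dvd_mul_right p i), Nat.mul_div_cancel_left i hp]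

theorem cauchy_substPow_eq_zero_of_not_dvd (r s : ℕ → ℝ) {n : ℕ}
    (hn : ¬ Nat.gcd p q ∣ n) :
    cauchy (substPow p r) (substPow q s) n = 0 := by
  refine sum_eq_zero fun j hj => ?_
  simp only [substPow]
  split_ifs with hj₁ hj₂ <;> try simp only [zero_mul, mul_zero]
  refine absurd ?_ hn
  have := Nat.dvd_add ((Nat.gcd_dvd_left p q).trans hj₁) ((Nat.gcd_dvd_right p q).trans hj₂)
  rwa [Nat.add_sub_cancel' (mem_range_succ_iff.mp hj)] at this

theorem eq_substPow_of_eq_zero {g : ℕ} {c : ℕ → ℝ} (hc : ∀ n, ¬ g ∣ n → c n = 0) :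
    c = substPow g fun m => c (g * m) := by
  ext n
  unfold substPow
  split_ifs with hn
  exacts [congrArg c (Nat.mul_div_cancel' hn).symm, hc n hn]

theorem one_le_cauchy_substPow (hp : 0 < p) (hq : 0 < q) (hr : 0 ≤ r) (hs : 0 ≤ s) {i k : ℕ}
    (hri : 1 ≤ r i) (hsk : 1 ≤ s k) :
    1 ≤ cauchy (substPow p r) (substPow q s) (p * i + q * k) := by
  have hsingle : ∑ j ∈ {p * i}, substPow p r j * substPow q s (p * i + q * k - j) ≤ _ :=
    sum_le_cauchy (substPow_nonneg hr) (substPow_nonneg hs)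
    (singleton_subset_iff.mpr (mem_range_succ_iff.mpr (Nat.le_add_right (p * i) (q * k))))
  rw [sum_singleton, Nat.add_sub_cancel_left, substPow_mul_self hp, substPow_mul_self hq]
    at hsingle
  exact (one_le_mul_of_one_le_of_one_le hri hsk).trans hsingle

theorem isLittleO_substPow_mul_cauchy (hp : 0 < p) (hq : 0 < q) (hr0 : 0 ≤ r) (hs0 : 0 ≤ s)
    (hr : ∀ᶠ i in atTop, 1 ≤ r i) (hs : ShiftEquivalent 1 s) (j : ℕ) :
    (fun n => substPow p r j * substPow q s (n - j)) =o[atTop]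
      cauchy (substPow p r) (substPow q s) := by
  by_cases hj : p ∣ j
  · obtain ⟨i, rfl⟩ := hj
    refine IsLittleO.const_mul_left (isLittleO_apply_sub_cauchy (substPow_nonneg hr0)
      (substPow_nonneg hs0) (mul_pos hq hp) ((hs.substPow hq).mul p) ?_) _
    obtain ⟨N, hN⟩ := eventually_atTop.mp hr
    filter_upwards [eventually_ge_atTop N] with t ht
    rw [show p * i + q * p * t = p * (i + q * t) by ring, substPow_mul_self hp]
    exact hN _ (by nlinarith)
  · simp [substPow, hj]

theorem RTN1.shiftEquivalent_cauchy_substPow (hr : RTN1 r) (hs : RTN1 s) (hp : 0 < p)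
    (hq : 0 < q) : ShiftEquivalent p (cauchy (substPow p r) (substPow q s)) :=
  ((rt1_iff.mp hr.1).2.substPow hp).cauchy_left (substPow_nonneg hr.2.nonneg)
    (substPow_nonneg hs.2.nonneg) (isLittleO_substPow_mul_cauchy hp hq hr.2.nonneg
      hs.2.nonneg (hr.2.eventually_one_le hr.1.1) (rt1_iff.mp hs.1).2)

theorem RTN1.frequently_pos_cauchy_substPow (hr : RTN1 r) (hs : RTN1 s) (hp : 0 < p)
    (hq : 0 < q) :
    ∃ᶠ m in atTop, 0 < cauchy (substPow p r) (substPow q s) (Nat.gcd p q * m) := by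
  obtain ⟨I, hI⟩ := eventually_atTop.mp (hr.2.eventually_one_le hr.1.1)
  obtain ⟨K, hK⟩ := eventually_atTop.mp (hs.2.eventually_one_le hs.1.1)
  refine frequently_atTop.mpr fun N => ?_
  set i := I + Nat.gcd p q * N
  have hg : Nat.gcd p q ∣ p * i + q * K :=
    Nat.dvd_add (dvd_mul_of_dvd_left (Nat.gcd_dvd_left p q) i)
      (dvd_mul_of_dvd_left (Nat.gcd_dvd_right p q) K)
  refine ⟨(p * i + q * K) / Nat.gcd p q, ?_, ?_⟩
  · refine (Nat.le_div_iff_mul_le (Nat.gcd_pos_of_pos_left q hp)).mpr ?_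
    have hi : i ≤ p * i := Nat.le_mul_of_pos_left i hp
    have hNi : N * Nat.gcd p q ≤ i := by rw [mul_comm]; exact Nat.le_add_left _ _
    omega
  · rw [Nat.mul_div_cancel' hg]
    exact one_pos.trans_le (one_le_cauchy_substPow hp hq hr.2.nonneg hs.2.nonneg
      (hI i (Nat.le_add_right I _)) (hK K le_rfl))

end RTN1

theorem RTN1.const_mul {r : ℕ → ℝ} (hr : RTN1 r) {k : ℕ} (hk : 1 ≤ k) :
    RTN1 fun n => (k : ℝ) * r n := by
  obtain ⟨⟨hpos, hratio⟩, hnat⟩ := hr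
  have hk0 : (0 : ℝ) < k := Nat.cast_pos.mpr hk
  refine ⟨⟨hpos.mono fun n hn => mul_pos hk0 hn, ?_⟩, fun n => ?_⟩
  · simpa only [mul_div_mul_left _ _ hk0.ne'] using hratio
  · obtain ⟨m, hm⟩ := hnat n
    exact ⟨k * m, show (k : ℝ) * r n = _ by rw [hm, Nat.cast_mul]⟩

theorem const_mul_substPow (k : ℝ) (d : ℕ) (r : ℕ → ℝ) :
    (fun n => k * substPow d r n) = substPow d fun n => k * r n := by
  ext n
  unfold substPow
  split_ifs <;> simp

theorem RTN1star.const_mul {a : ℕ → ℝ} (ha : RTN1star a) {k : ℕ} (hk : 1 ≤ k) :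
    RTN1star fun n => (k : ℝ) * a n := by
  obtain ⟨d, hd, r, hr, rfl⟩ := ha
  exact ⟨d, hd, _, hr.const_mul hk, const_mul_substPow _ d r⟩

theorem RTN1star.cauchy {a b : ℕ → ℝ} (ha : RTN1star a) (hb : RTN1star b) :
    RTN1star (cauchy a b) := by
  obtain ⟨p, hp, r, hr, rfl⟩ := ha
  obtain ⟨q, hq, s, hs, rfl⟩ := hb
  set c := _root_.cauchy (substPow p r) (substPow q s)
  have hg : 0 < Nat.gcd p q := Nat.gcd_pos_of_pos_left q hp
  have hcq : ShiftEquivalent q c := by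
    simpa only [c, cauchy_comm] using hs.shiftEquivalent_cauchy_substPow hr hq hp
  have hcg : ShiftEquivalent (Nat.gcd p q * 1) c :=
    (mul_one (Nat.gcd p q)).symm ▸ (hr.shiftEquivalent_cauchy_substPow hs hp hq).gcd hcq
  have hshift : ShiftEquivalent 1 fun m => c (Nat.gcd p q * m) := hcg.comp_mul hg
  refine ⟨Nat.gcd p q, hg, fun m => c (Nat.gcd p q * m), ⟨rt1_iff.mpr ⟨?_, hshift⟩, ?_⟩,
    eq_substPow_of_eq_zero fun n => cauchy_substPow_eq_zero_of_not_dvd r s⟩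
  · exact hshift.eventually_pos (hr.frequently_pos_cauchy_substPow hs hp hq)
  · exact fun m => (hr.2.substPow p).cauchy (hs.2.substPow q) _

/-- `RTN1*` is closed under multiplication by positive integers and Cauchy product. -/
theorem RTN1star_closure (a b : ℕ → ℝ) (ha : RTN1star a) (hb : RTN1star b)
    (k : ℕ) (hk : 1 ≤ k) :
    RTN1star (fun n => (k : ℝ) * a n) ∧ RTN1star (cauchy a b) :=
  ⟨ha.const_mul hk, ha.cauchy hb⟩
end
end

section
/- (Schur's Tauberian Theorem.) Suppose B(x) and C(x) are real power series such that (i) B(x) has radius of convergence strictly greater than 1, (ii) B(1) > 0, and (iii) C(x) ∈ RT1. Let A(x) := B(x)·C(x). Then a(n) ~ B(1)·c(n) as n → ∞, i.e. a(n)/(B(1)·c(n)) → 1. -/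
/-!
Fix `1 < r < q`, where `∑ |b n| qⁿ < ∞`. Since `c(n-1)/c(n) → 1`, eventually `c(n) ≤ r·c(n+1)`,
so `c(n-j)/c(n) ≤ K rʲ` uniformly in `j ≤ n`: iterate the ratio bound while `n - j` stays in
the range where it holds, and for the finitely many remaining indices use that `c(n)` decays
at most geometrically. Each ratio `c(n-j)/c(n)` tends to `1`, so by dominated convergence
(Tannery's theorem) `a(n)/c(n) = ∑_{j ≤ n} b(j)·c(n-j)/c(n) → ∑ b(j) = B(1)`.
-/

open Filter Finset

noncomputable section

open Topology

lemma tendsto_sum_range_of_dominated {G : Type*} [NormedAddCommGroup G] [CompleteSpace G]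
    {f : ℕ → ℕ → G} {g : ℕ → G} {bound : ℕ → ℝ} (h_sum : Summable bound)
    (hfg : ∀ k, Tendsto (f · k) atTop (𝓝 (g k)))
    (h_bound : ∀ᶠ n in atTop, ∀ k ≤ n, ‖f n k‖ ≤ bound k) :
    Tendsto (fun n => ∑ k ∈ range (n + 1), f n k) atTop (𝓝 (∑' k, g k)) := by
  set F : ℕ → ℕ → G := fun n k => if k ≤ n then f n k else 0
  have hF : ∀ n, ∑' k, F n k = ∑ k ∈ range (n + 1), f n k := fun n => by
    rw [tsum_eq_sum (s := range (n + 1)) fun k hk => if_neg (by simpa using hk)]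
    exact sum_congr rfl fun k hk => if_pos (by simpa [Nat.lt_succ_iff] using hk)
  simp_rw [← hF]
  refine tendsto_tsum_of_dominated_convergence h_sum.abs (fun k => ?_) ?_
  · refine (hfg k).congr' ?_
    filter_upwards [eventually_ge_atTop k] with n hn
    exact (if_pos hn).symm
  · filter_upwards [h_bound] with n hn k
    by_cases hk : k ≤ n
    · simpa [F, hk] using (hn k hk).trans (le_abs_self _)
    · simp [F, hk]

lemma le_pow_mul_add_of_le_mul_succ {c : ℕ → ℝ} {r : ℝ} {N : ℕ} (hr : 0 ≤ r)
    (h : ∀ n ≥ N, c n ≤ r * c (n + 1)) (m : ℕ) (hm : N ≤ m) (k : ℕ) :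
    c m ≤ r ^ k * c (m + k) := by
  induction k with
  | zero => simp
  | succ k ih =>
    calc c m ≤ r ^ k * c (m + k) := ih
      _ ≤ r ^ k * (r * c (m + k + 1)) := by gcongr; exact h _ (by omega)
      _ = r ^ (k + 1) * c (m + (k + 1)) := by ring_nf

namespace RT1

variable {c : ℕ → ℝ}

lemma eventually_le_mul_succ (hc : RT1 c) {r : ℝ} (hr : 1 < r) :
    ∀ᶠ n in atTop, 0 < c n ∧ c n ≤ r * c (n + 1) := by
  have hlt : ∀ᶠ n in atTop, c n / c (n + 1) < r := by
    simpa using (hc.2.comp (tendsto_add_atTop_nat 1)).eventually (gt_mem_nhds hr)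
  filter_upwards [hc.1, (tendsto_add_atTop_nat 1).eventually hc.1, hlt] with n hn hn1 hlt
  exact ⟨hn, ((div_lt_iff₀ hn1).mp hlt).le⟩

lemma tendsto_div_sub (hc : RT1 c) (j : ℕ) :
    Tendsto (fun n => c (n - j) / c n) atTop (𝓝 1) := by
  induction j with
  | zero =>
    refine tendsto_const_nhds.congr' ?_
    filter_upwards [hc.1] with n hn
    simp [hn.ne']
  | succ j ih =>
    have hstep := (hc.2.comp (tendsto_sub_atTop_nat j)).mul ih
    rw [mul_one] at hstep
    refine hstep.congr' ?_
    filter_upwards [(tendsto_sub_atTop_nat j).eventually hc.1] with n hn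
    simp only [Function.comp_apply, Nat.sub_sub]
    field_simp [hn.ne']

lemma exists_abs_div_sub_le (hc : RT1 c) {r : ℝ} (hr : 1 < r) :
    ∃ K, ∀ᶠ n in atTop, ∀ j ≤ n, |c (n - j) / c n| ≤ K * r ^ j := by
  obtain ⟨N, hN⟩ := (hc.eventually_le_mul_succ hr).exists_forall_of_atTop
  have hgeom := le_pow_mul_add_of_le_mul_succ (r := r) (by linarith) fun n hn => (hN n hn).2
  set M := ∑ k ∈ range N, |c k|
  have hcN := (hN N le_rfl).1
  refine ⟨max 1 (M / c N), ?_⟩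
  filter_upwards [eventually_ge_atTop N] with n hn j hj
  have hcn := (hN n hn).1
  rw [abs_div, abs_of_pos hcn, div_le_iff₀ hcn]
  rcases le_or_gt N (n - j) with hfar | hnear
  · have h := hgeom (n - j) hfar j
    rw [Nat.sub_add_cancel hj] at h
    rw [abs_of_pos (hN _ hfar).1]
    calc c (n - j) ≤ r ^ j * c n := h
      _ ≤ max 1 (M / c N) * r ^ j * c n := by
        rw [mul_assoc]
        exact le_mul_of_one_le_left (by positivity) (le_max_left _ _)
  · have hM : |c (n - j)| ≤ M :=
      single_le_sum (f := fun k => |c k|) (fun _ _ => abs_nonneg _) (mem_range.mpr hnear)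
    have hdecay := hgeom N le_rfl (n - N)
    rw [Nat.add_sub_cancel' hn] at hdecay
    calc |c (n - j)| ≤ M / c N * c N := by rwa [div_mul_cancel₀ _ hcN.ne']
      _ ≤ M / c N * (r ^ (n - N) * c n) := by gcongr
      _ ≤ max 1 (M / c N) * r ^ j * c n := by
        rw [← mul_assoc]; gcongr
        · exact le_max_right _ _
        · linarith
        · omega

end RT1

/-- Schur's Tauberian Theorem: if `B` has radius of convergence `> 1`, `B(1) > 0` and
`C ∈ RT1`, then the coefficients of `A = B·C` satisfy `a(n) ~ B(1)·c(n)`. -/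
theorem schur_tauberian (b c : ℕ → ℝ)
    (hrad : ∃ q : ℝ, 1 < q ∧ Summable (fun n => |b n| * q ^ n))
    (hpos : 0 < ∑' n, b n) (hc : RT1 c) :
    Filter.Tendsto (fun n => cauchy b c n / ((∑' m, b m) * c n)) Filter.atTop (nhds 1) := by
  obtain ⟨q, hq, hbq⟩ := hrad
  obtain ⟨K, hK⟩ := hc.exists_abs_div_sub_le (r := (1 + q) / 2) (by linarith)
  have hbr : Summable fun j => K * (|b j| * ((1 + q) / 2) ^ j) := by
    refine (hbq.of_nonneg_of_le (fun j => by positivity) fun j => ?_).mul_left K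
    gcongr; linarith
  have hlim : Tendsto (fun n => ∑ j ∈ range (n + 1), b j * (c (n - j) / c n)) atTop
      (𝓝 (∑' j, b j)) := by
    refine tendsto_sum_range_of_dominated hbr
      (fun j => by simpa using (hc.tendsto_div_sub j).const_mul (b j)) ?_
    filter_upwards [hK] with n hn j hj
    rw [Real.norm_eq_abs, abs_mul, mul_left_comm]
    exact mul_le_mul_of_nonneg_left (hn j hj) (abs_nonneg _)
  have hratio := hlim.div_const (∑' j, b j)
  rw [div_self hpos.ne'] at hratio
  refine hratio.congr fun n => ?_
  simp only [cauchy, sum_div, mul_div_assoc, div_div, mul_comm (c n)]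
end
end

section
/- Suppose B(x) and C(x) are real power series such that B(x) has radius of convergence strictly greater than 1, B(1) > 0, and C(x) ∈ RT1. Then B(x)·C(x) ∈ RT1. -/
open Filter Finset

noncomputable section

/-- If `B` has radius of convergence `> 1`, `B(1) > 0` and `C ∈ RT1`, then `B·C ∈ RT1`. -/
theorem schur_cor (b c : ℕ → ℝ)
    (hrad : ∃ q : ℝ, 1 < q ∧ Summable (fun n => |b n| * q ^ n))
    (hpos : 0 < ∑' n, b n) (hc : RT1 c) :
    RT1 (cauchy b c) := by
  obtain ⟨q, hq1, hsum⟩ := hrad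
  have hq0 : (0:ℝ) < q := lt_trans one_pos hq1
  obtain ⟨p, hp1, hpq⟩ : ∃ p : ℝ, 1 < p ∧ p < q := ⟨(1 + q) / 2, by linarith, by linarith⟩
  have hp0 : (0:ℝ) < p := lt_trans one_pos hp1
  -- choose N
  obtain ⟨N', hN'⟩ := eventually_atTop.mp
    (hc.1.and (hc.2.eventually_lt_const hp1))
  set N := N' + 1 with hNdef
  have hc1 : ∀ n, N' ≤ n → 0 < c n := fun n hn => (hN' n hn).1
  have hcN : ∀ n, N ≤ n → 0 < c n := fun n hn => hc1 n (by omega)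
  have hratio : ∀ n, N ≤ n → c (n - 1) < p * c n := by
    intro n hn
    have h := (hN' n (by omega)).2
    have := hc1 n (by omega)
    calc c (n-1) = c (n-1) / c n * c n := by field_simp
    _ < p * c n := by
        apply mul_lt_mul_of_pos_right h this
  -- L1
  have L1 : ∀ j n, N + j ≤ n → c (n - j) ≤ p ^ j * c n := by
    intro j
    induction j with
    | zero => intro n _; simp
    | succ j ih =>
      intro n hn
      have h1 : N + j ≤ n - 1 := by omega
      have h2 : n - (j + 1) = n - 1 - j := by omega
      have h3 := ih (n - 1) h1
      have h4 := hratio n (by omega)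
      calc c (n - (j+1)) = c (n - 1 - j) := by rw [h2]
      _ ≤ p ^ j * c (n - 1) := h3
      _ ≤ p ^ j * (p * c n) := by
          apply mul_le_mul_of_nonneg_left h4.le (by positivity)
      _ = p ^ (j+1) * c n := by ring
  -- L1 positivity
  have L2 : ∀ j : ℕ, Tendsto (fun n => c (n - j) / c n) atTop (nhds 1) := by
    intro j
    induction j with
    | zero =>
      apply Tendsto.congr' _ tendsto_const_nhds
      filter_upwards [eventually_ge_atTop N] with n hn
      simp [div_self (hcN n hn).ne']
    | succ j ih =>
      have h1 : Tendsto (fun n => c (n - 1 - j) / c (n - 1)) atTop (nhds 1) :=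
        ih.comp (tendsto_sub_atTop_nat 1)
      have h2 := h1.mul hc.2
      rw [mul_one] at h2
      apply Tendsto.congr' _ h2
      filter_upwards [eventually_ge_atTop (N + j + 1)] with n hn
      have hne : c (n - 1) ≠ 0 := (hcN (n-1) (by omega)).ne'
      have h3 : n - (j + 1) = n - 1 - j := by omega
      rw [h3, div_mul_div_cancel₀ hne]
  -- constants
  set K := ∑' n, |b n| * q ^ n with hKdef
  have hK : ∀ j, |b j| * q ^ j ≤ K := by
    intro j
    rw [hKdef]
    exact Summable.le_tsum hsum j (fun i _ => mul_nonneg (abs_nonneg _) (pow_nonneg hq0.le _))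
  have hK0 : (0:ℝ) ≤ K := le_trans (by positivity) (hK 0)
  set M := ∑ k ∈ range N, |c k| with hMdef
  have hM : ∀ k, k < N → |c k| ≤ M := by
    intro k hk
    rw [hMdef]
    exact Finset.single_le_sum (f := fun i => |c i|) (fun i _ => abs_nonneg _) (mem_range.mpr hk)
  have hM0 : (0:ℝ) ≤ M := le_trans (abs_nonneg _) (hM 0 (by omega))
  have hcN0 : 0 < c N := hcN N le_rfl
  -- the function and its tsum identity
  set f : ℕ → ℕ → ℝ := fun n j => if j ≤ n then b j * (c (n - j) / c n) else 0 with hfdef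
  have htsum : ∀ n, (∑' j, f n j) = cauchy b c n / c n := by
    intro n
    rw [tsum_eq_sum (s := range (n+1)) (fun j hj => by
      simp only [hfdef]
      exact if_neg (fun h => hj (mem_range.mpr (Nat.lt_succ_of_le h))))]
    rw [cauchy, Finset.sum_div]
    apply Finset.sum_congr rfl
    intro j hj
    have hjle : j ≤ n := Nat.lt_succ_iff.mp (mem_range.mp hj)
    simp only [hfdef, if_pos hjle]
    rw [mul_div_assoc]
  -- bound
  set bound : ℕ → ℝ := fun j => |b j| * p ^ j + K * M / c N * (p / q) ^ j with hbd
  have hbsum : Summable bound := by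
    apply Summable.add
    · apply Summable.of_nonneg_of_le (fun j => by positivity) _ hsum
      intro j
      exact mul_le_mul_of_nonneg_left (pow_le_pow_left₀ hp0.le hpq.le j) (abs_nonneg _)
    · exact (summable_geometric_of_lt_one (by positivity) (by
        rw [div_lt_one hq0]; exact hpq)).mul_left _
  have h_bound : ∀ᶠ n in atTop, ∀ j, ‖f n j‖ ≤ bound j := by
    filter_upwards [eventually_ge_atTop N] with n hn j
    have hbdpos : (0:ℝ) ≤ bound j := by rw [hbd]; positivity
    by_cases hjn : j ≤ n
    · rw [hfdef]
      simp only [if_pos hjn]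
      rw [Real.norm_eq_abs, abs_mul, abs_div, abs_of_pos (hcN n hn)]
      by_cases hcase : N + j ≤ n
      · -- good region
        have hpos1 : 0 < c (n - j) := hcN (n - j) (by omega)
        have hle := L1 j n hcase
        rw [abs_of_pos hpos1]
        have : c (n - j) / c n ≤ p ^ j := by
          rw [div_le_iff₀ (hcN n hn)]
          linarith [hle]
        calc |b j| * (c (n-j) / c n) ≤ |b j| * p ^ j :=
              mul_le_mul_of_nonneg_left this (abs_nonneg _)
        _ ≤ bound j := by
              have h6 : (0:ℝ) ≤ K * M / c N * (p / q) ^ j := by positivity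
              rw [hbd]; simp only; linarith
      · -- bad region: n - j < N
        have hsmall : n - j < N := by omega
        have hMb : |c (n - j)| ≤ M := hM _ hsmall
        have hcNle : c N ≤ p ^ j * c n := by
          have := L1 (n - N) n (by omega)
          have h5 : n - (n - N) = N := by omega
          rw [h5] at this
          calc c N ≤ p ^ (n - N) * c n := this
          _ ≤ p ^ j * c n := by
              apply mul_le_mul_of_nonneg_right _ (hcN n hn).le
              exact pow_le_pow_right₀ hp1.le (by omega)
        have hbj : |b j| ≤ K / q ^ j := by
          rw [le_div_iff₀ (by positivity)]; exact hK j
        have hfrac : |c (n - j)| / c n ≤ M * p ^ j / c N := by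
          have hd : (0:ℝ) < c N / p ^ j := by positivity
          have hdd : c N / p ^ j ≤ c n := by
            rw [div_le_iff₀ (by positivity)]; linarith [hcNle]
          calc |c (n-j)| / c n ≤ M / (c N / p ^ j) := div_le_div₀ hM0 hMb hd hdd
          _ = M * p ^ j / c N := by rw [div_div_eq_mul_div]
        calc |b j| * (|c (n-j)| / c n) ≤ (K / q ^ j) * (M * p ^ j / c N) := by
              apply mul_le_mul hbj hfrac (div_nonneg (abs_nonneg _) (hcN n hn).le)
                (by positivity)
        _ = K * M / c N * (p / q) ^ j := by
              rw [div_pow]; ring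
        _ ≤ bound j := by
              have h6 : (0:ℝ) ≤ |b j| * p ^ j := by positivity
              rw [hbd]; simp only; linarith
    · rw [hfdef]
      simp only [if_neg hjn, norm_zero]
      exact hbdpos
  have h_lim : ∀ j, Tendsto (fun n => f n j) atTop (nhds (b j)) := by
    intro j
    have := (tendsto_const_nhds (x := b j) (f := atTop (α := ℕ))).mul (L2 j)
    rw [mul_one] at this
    apply Tendsto.congr' _ this
    filter_upwards [eventually_ge_atTop j] with n hn
    rw [hfdef]; simp [if_pos hn]
  have hA : Tendsto (fun n => cauchy b c n / c n) atTop (nhds (∑' n, b n)) := by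
    have := tendsto_tsum_of_dominated_convergence hbsum h_lim h_bound
    apply Tendsto.congr _ this
    intro n; exact htsum n
  -- eventual positivity of a
  have hapos : ∀ᶠ n in atTop, 0 < cauchy b c n := by
    filter_upwards [hA.eventually (eventually_gt_nhds hpos), eventually_ge_atTop N]
      with n h1 h2
    have hcn := hcN n h2
    have : cauchy b c n = cauchy b c n / c n * c n := by field_simp
    rw [this]; exact mul_pos h1 hcn
  constructor
  · exact hapos
  · -- ratio tends to 1
    have h1 : Tendsto (fun n => cauchy b c (n-1) / c (n-1)) atTop (nhds (∑' n, b n)) :=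
      hA.comp (tendsto_sub_atTop_nat 1)
    have h3 : Tendsto (fun n => c n / cauchy b c n) atTop (nhds (∑' n, b n)⁻¹) := by
      have := hA.inv₀ hpos.ne'
      apply Tendsto.congr _ this
      intro n; rw [inv_div]
    have h4 := (h1.mul hc.2).mul h3
    rw [mul_one, mul_inv_cancel₀ hpos.ne'] at h4
    apply Tendsto.congr' _ h4
    filter_upwards [hapos, eventually_ge_atTop (N+1)] with n ha hn
    have hc1' : c (n-1) ≠ 0 := (hcN (n-1) (by omega)).ne'
    have hc2' : c n ≠ 0 := (hcN n (by omega)).ne'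
    field_simp
end
end

section
/- Suppose A(x) = B(x)·C(x) (Cauchy product), where A(x) and B(x) have nonnegative coefficients and C(x) is not the zero power series. If (i) eventually a(n) > 0 and a(n−1) ≤ a(n), (ii) b(n) = o(a(n)), and (iii) C(x) ∈ RT1, then A(x) ∈ RT1. -/
open Filter Finset

noncomputable section

/-!
A sequence `r` is in `RT1` iff it is eventually positive and `r (n - 1) - r n = o(r n)`.
Since `(1 - x) A = B · (1 - x) C`, the differences `a (n - 1) - a n` are, up to `c 0 · b n`, the
coefficients of `B · E` with `e k = c (k - 1) - c k`, and `e = o(c)` as `C ∈ RT1`.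
So it suffices that `B · o(C) = o(B · C)`, which is Schur's argument: outside a finite window
`k < N` the coefficients of `E` are at most `ε · c k`, contributing at most `ε · a n`, and each of
the finitely many remaining terms `b (n - k)` is `o(a n)` because `b = o(a)` and `a` is eventually
nondecreasing.
-/

open Asymptotics

/-- The coefficient of `x^(n+1)` in `(1 - x) A = B · (1 - x) C`; the junk value
`c (0 - 1) - c 0 = 0` is compensated by the term `c 0 * b (n + 1)`. -/
theorem cauchy_sub_cauchy_succ (b c : ℕ → ℝ) (n : ℕ) :
    cauchy b c n - cauchy b c (n + 1) =
      cauchy b (fun k => c (k - 1) - c k) (n + 1) - c 0 * b (n + 1) := by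
  have hshift : ∀ j ∈ range (n + 1), n + 1 - j - 1 = n - j := fun j _ => by omega
  simp only [cauchy, sum_range_succ _ (n + 1), Nat.sub_self, mul_sub, sum_sub_distrib,
    sum_congr rfl fun j hj => congrArg (fun m => b j * c m) (hshift j hj)]
  ring

theorem abs_cauchy_le {b e f : ℕ → ℝ} (hb : ∀ n, 0 ≤ b n) (hef : ∀ k, |e k| ≤ f k) (n : ℕ) :
    |cauchy b e n| ≤ cauchy b f n :=
  (abs_sum_le_sum_abs _ _).trans <| sum_le_sum fun j _ => by
    rw [abs_mul, abs_of_nonneg (hb j)]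
    exact mul_le_mul_of_nonneg_left (hef _) (hb j)

theorem cauchy_eq_sum_range_of_eq_zero {b f : ℕ → ℝ} {N n : ℕ} (hf : ∀ k, N ≤ k → f k = 0)
    (hn : N ≤ n) : cauchy b f n = ∑ k ∈ range N, f k * b (n - k) := by
  rw [cauchy, ← sum_range_reflect]
  refine (sum_subset (range_subset_range.2 (by omega)) fun k hk hkN => ?_).symm.trans
    (sum_congr rfl fun k hk => ?_)
  · rw [mem_range] at hk hkN
    rw [show n + 1 - 1 - k = n - k by omega, show n - (n - k) = k by omega, hf k (by omega),
      mul_zero]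
  · rw [mem_range] at hk
    rw [show n + 1 - 1 - k = n - k by omega, show n - (n - k) = k by omega, mul_comm]

theorem eventually_le_of_eventually_pred_le {α : Type*} [Preorder α] {a : ℕ → α}
    (ha : ∀ᶠ n in atTop, a (n - 1) ≤ a n) (k : ℕ) : ∀ᶠ n in atTop, a (n - k) ≤ a n := by
  induction k with
  | zero => exact Eventually.of_forall fun n => le_rfl
  | succ k ih =>
    filter_upwards [ih, (tendsto_sub_atTop_nat k).eventually ha] with n hk hstep
    rw [Nat.sub_succ']
    exact hstep.trans hk

theorem Asymptotics.IsLittleO.comp_sub_of_pred_le {a b : ℕ → ℝ} (hba : b =o[atTop] a)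
    (ha_nonneg : ∀ᶠ n in atTop, 0 ≤ a n) (ha_mono : ∀ᶠ n in atTop, a (n - 1) ≤ a n) (k : ℕ) :
    (fun n => b (n - k)) =o[atTop] a := by
  refine (hba.comp_tendsto (tendsto_sub_atTop_nat k)).trans_isBigO (IsBigO.of_bound' ?_)
  filter_upwards [eventually_le_of_eventually_pred_le ha_mono k,
    (tendsto_sub_atTop_nat k).eventually ha_nonneg] with n hle hnonneg
  simpa [Real.norm_eq_abs, abs_of_nonneg hnonneg, abs_of_nonneg (hnonneg.trans hle)] using hle

theorem isLittleO_cauchy_of_eq_zero {a b f : ℕ → ℝ} {N : ℕ}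
    (hb : ∀ k, (fun n => b (n - k)) =o[atTop] a) (hf : ∀ k, N ≤ k → f k = 0) :
    cauchy b f =o[atTop] a := by
  refine (IsLittleO.fun_sum (s := range N) fun k _ => (hb k).const_mul_left (f k)).congr' ?_
    EventuallyEq.rfl
  filter_upwards [eventually_ge_atTop N] with n hn
  simp [cauchy_eq_sum_range_of_eq_zero hf hn]

theorem isLittleO_cauchy {b c e : ℕ → ℝ} (hb : ∀ n, 0 ≤ b n)
    (ha_nonneg : ∀ᶠ n in atTop, 0 ≤ cauchy b c n)
    (ha_mono : ∀ᶠ n in atTop, cauchy b c (n - 1) ≤ cauchy b c n)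
    (hba : b =o[atTop] cauchy b c) (hc : ∀ᶠ k in atTop, 0 ≤ c k) (hec : e =o[atTop] c) :
    cauchy b e =o[atTop] cauchy b c := by
  refine isLittleO_iff.2 fun ε hε => ?_
  obtain ⟨N, hN⟩ := eventually_atTop.1 (hc.and (isLittleO_iff.1 hec (half_pos hε)))
  set g : ℕ → ℝ := fun k => if k < N then |e k| + ε / 2 * |c k| else 0
  have heg : ∀ k, |e k| ≤ ε / 2 * c k + g k := fun k => by
    by_cases hk : k < N
    · simp only [g, if_pos hk]
      nlinarith [neg_abs_le (c k)]
    · obtain ⟨hck, hek⟩ := hN k (not_lt.1 hk)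
      simp only [g, if_neg hk, Real.norm_eq_abs, abs_of_nonneg hck] at hek ⊢
      linarith
  have hg : cauchy b g =o[atTop] cauchy b c :=
    isLittleO_cauchy_of_eq_zero (hba.comp_sub_of_pred_le ha_nonneg ha_mono)
      fun k hk => if_neg (not_lt.2 hk)
  filter_upwards [isLittleO_iff.1 hg (half_pos hε), ha_nonneg] with n hgn han
  rw [Real.norm_of_nonneg han] at hgn ⊢
  calc ‖cauchy b e n‖ ≤ cauchy b (fun k => ε / 2 * c k + g k) n := abs_cauchy_le hb heg n
    _ = ε / 2 * cauchy b c n + cauchy b g n := by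
      simp only [cauchy, mul_add, sum_add_distrib, mul_left_comm _ (ε / 2), ← mul_sum]
    _ ≤ ε * cauchy b c n := by linarith [Real.le_norm_self (cauchy b g n)]

theorem rt1_iff_isLittleO {r : ℕ → ℝ} :
    RT1 r ↔ (∀ᶠ n in atTop, 0 < r n) ∧ (fun n => r (n - 1) - r n) =o[atTop] r := by
  refine and_congr_right fun hpos => ?_
  rw [isLittleO_iff_tendsto' (hpos.mono fun n hn h => absurd h hn.ne'),
    ← tendsto_sub_nhds_zero_iff]
  refine tendsto_congr' ?_
  filter_upwards [hpos] with n hn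
  field_simp

theorem var_on_schur_general (a b c : ℕ → ℝ) (hab : a = cauchy b c)
    (hB : ∀ n, 0 ≤ b n)
    (h1 : ∀ᶠ n in Filter.atTop, 0 < a n ∧ a (n - 1) ≤ a n)
    (h2 : Filter.Tendsto (fun n => b n / a n) Filter.atTop (nhds 0))
    (h3 : RT1 c) : RT1 a := by
  subst hab
  have hpos : ∀ᶠ n in atTop, 0 < cauchy b c n := h1.mono fun n h => h.1
  have hba : b =o[atTop] cauchy b c :=
    (isLittleO_iff_tendsto' (hpos.mono fun n hn h => absurd h hn.ne')).2 h2
  have hdiff := isLittleO_cauchy hB (hpos.mono fun n => le_of_lt) (h1.mono fun n h => h.2) hba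
    (h3.1.mono fun n => le_of_lt) (rt1_iff_isLittleO.1 h3).2
  refine rt1_iff_isLittleO.2 ⟨hpos, (hdiff.sub (hba.const_mul_left (c 0))).congr' ?_ .rfl⟩
  filter_upwards [eventually_ge_atTop 1] with n hn
  obtain ⟨m, rfl⟩ := Nat.exists_eq_add_of_le' hn
  exact (cauchy_sub_cauchy_succ b c m).symm

/-- Variation on Schur: if `A = B·C` with `A, B` nonnegative, `C ≠ 0`, eventually
`a(n) > 0` and `a(n-1) ≤ a(n)`, `b(n) = o(a(n))`, and `C ∈ RT1`, then `A ∈ RT1`. -/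
theorem var_on_schur (a b c : ℕ → ℝ) (hab : a = cauchy b c)
    (hA : ∀ n, 0 ≤ a n) (hB : ∀ n, 0 ≤ b n) (hC : c ≠ 0)
    (h1 : ∀ᶠ n in Filter.atTop, 0 < a n ∧ a (n - 1) ≤ a n)
    (h2 : Filter.Tendsto (fun n => b n / a n) Filter.atTop (nhds 0))
    (h3 : RT1 c) : RT1 a :=
  var_on_schur_general a b c hab hB h1 h2 h3
end
end

section
/- Let A(x) be a power series with natural-number coefficients that are eventually positive, and suppose that for some natural number u ≥ 0 one has a(n) − a(n−1) = o(a(n) + a(n−1) + ⋯ + a(n−u)) as n → ∞. Then A(x) ∈ RT1. -/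
open Filter Finset

noncomputable section

set_option maxHeartbeats 1000000 in
/-- If `A` has natural-number coefficients that are eventually positive and
`a(n) - a(n-1) = o(a(n) + ⋯ + a(n-u))` for some `u ≥ 0`, then `A ∈ RT1`. -/
theorem oSum (a : ℕ → ℝ) (hnat : IsNatSeries a) (hpos : ∀ᶠ n in Filter.atTop, 0 < a n)
    (u : ℕ)
    (h : Filter.Tendsto
      (fun n => (a n - a (n - 1)) / ∑ j ∈ Finset.range (u + 1), a (n - j))
      Filter.atTop (nhds 0)) :
    RT1 a := by
  classical
  have ha0 : ∀ n, 0 ≤ a n := by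
    intro n; obtain ⟨k, hk⟩ := hnat n; rw [hk]; exact_mod_cast Nat.zero_le k
  set S : ℕ → ℝ := fun m => ∑ j ∈ Finset.range (u + 1), a (m - j) with hSdef
  have hSapp : ∀ m, S m = ∑ j ∈ Finset.range (u + 1), a (m - j) := fun m => rfl
  have hS0 : ∀ m, 0 ≤ S m := fun m => Finset.sum_nonneg fun j _ => ha0 _
  have haS : ∀ m, a m ≤ S m := by
    intro m
    have h0 : (0 : ℕ) ∈ Finset.range (u + 1) := Finset.mem_range.mpr (Nat.succ_pos u)
    have := Finset.single_le_sum (f := fun j => a (m - j)) (fun j _ => ha0 _) h0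
    simpa using this
  obtain ⟨P, hP⟩ : ∃ P, ∀ m, P ≤ m → 1 ≤ a m := by
    obtain ⟨P, hP⟩ := Filter.eventually_atTop.mp hpos
    refine ⟨P, fun m hm => ?_⟩
    obtain ⟨k, hk⟩ := hnat m
    have h1 := hP m hm
    rw [hk] at h1 ⊢
    have hk' : 0 < k := by exact_mod_cast h1
    exact_mod_cast hk'
  have hS1 : ∀ m, P ≤ m → 1 ≤ S m := fun m hm => (hP m hm).trans (haS m)
  set K : ℝ := 4 * ((u : ℝ) + 1) with hK
  set C₁ : ℝ := 4 ^ (u + 1) * K with hC₁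
  have hu0 : (0:ℝ) ≤ (u:ℝ) := Nat.cast_nonneg u
  have hKpos : 0 < K := by rw [hK]; positivity
  have hC₁pos : 0 < C₁ := by rw [hC₁]; positivity
  set ε₀ : ℝ := 1 / (2 * ((u : ℝ) + 1) * C₁) with hε₀
  have hε₀pos : 0 < ε₀ := by rw [hε₀]; positivity
  have hu1 : (1:ℝ) ≤ (u:ℝ) + 1 := by linarith
  have hpow1 : (1:ℝ) ≤ 4 ^ (u + 1) := one_le_pow₀ (by norm_num)
  have hc1 : (1:ℝ) ≤ C₁ := by
    rw [hC₁]
    calc (1:ℝ) = 1 * 1 := by norm_num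
      _ ≤ 4 ^ (u + 1) * K := by
          apply mul_le_mul hpow1 (by rw [hK]; linarith) (by norm_num) (by positivity)
  have hε₀half : ε₀ ≤ 1 / 2 := by
    rw [hε₀]
    have h11 : (1:ℝ) ≤ ((u:ℝ) + 1) * C₁ := by
      have := mul_le_mul hu1 hc1 (by norm_num) (by positivity)
      simpa using this
    have hge : (2:ℝ) ≤ 2 * ((u:ℝ) + 1) * C₁ := by linarith
    exact one_div_le_one_div_of_le (by norm_num) hge
  have hhalf : ((u : ℝ) + 1) * ε₀ * C₁ = 1 / 2 := by
    rw [hε₀]; field_simp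
  -- conversion of the o-hypothesis
  have hconv : ∀ ε : ℝ, 0 < ε → ∃ N, ∀ m, N ≤ m → |a m - a (m - 1)| ≤ ε * S m := by
    intro ε hε
    obtain ⟨N, hN⟩ := Metric.tendsto_atTop.mp h ε hε
    refine ⟨N + P, fun m hm => ?_⟩
    have h1 := hN m (by omega)
    have hSm : 1 ≤ S m := hS1 m (by omega)
    rw [← hSapp m] at h1
    rw [Real.dist_eq, sub_zero, abs_div] at h1
    have hSpos : (0:ℝ) < S m := by linarith
    rw [abs_of_pos hSpos] at h1
    have h2 := (div_lt_iff₀ hSpos).mp h1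
    linarith
  obtain ⟨N₀, hd⟩ := hconv ε₀ hε₀pos
  set N₁ : ℕ := N₀ + P + u + 1 with hN₁
  -- base case: some n₀ ≥ N₁ has S n₀ ≤ K * a n₀
  have hbase : ∃ n₀, N₁ ≤ n₀ ∧ S n₀ ≤ K * a n₀ := by
    by_contra hb
    push_neg at hb
    rcases Nat.eq_zero_or_pos u with hu0' | hu
    · have h1 := hb N₁ le_rfl
      have h2 : S N₁ = a N₁ := by rw [hSapp]; subst hu0'; simp
      have h3 : 1 ≤ a N₁ := hP N₁ (by omega)
      rw [h2, hK, hu0'] at h1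
      push_cast at h1
      nlinarith
    · set B : ℝ := ∑ i ∈ Finset.range u, S (N₁ + i) with hB
      have hBS : ∀ m, N₁ ≤ m → m < N₁ + u → S m ≤ B := by
        intro m h1 h2
        have heq : m = N₁ + (m - N₁) := by omega
        rw [heq]
        exact Finset.single_le_sum (f := fun i => S (N₁ + i)) (fun i _ => hS0 _)
          (Finset.mem_range.mpr (by omega))
      have hchain : ∀ m, N₁ + u ≤ m → ∃ j, 1 ≤ j ∧ j ≤ u ∧ 2 * S m ≤ S (m - j) := by
        intro m hm
        by_contra hc
        push_neg at hc
        have hKS : K * S m ≤ ∑ j ∈ Finset.range (u + 1), S (m - j) := by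
          have he : K * S m = ∑ j ∈ Finset.range (u + 1), K * a (m - j) := by
            rw [hSapp, Finset.mul_sum]
          rw [he]
          apply Finset.sum_le_sum
          intro j hj
          have hj' : j ≤ u := by simpa [Nat.lt_succ_iff] using hj
          exact (hb (m - j) (by omega)).le
        have hub : ∑ j ∈ Finset.range (u + 1), S (m - j) ≤ (u:ℝ) * (2 * S m) + S m := by
          rw [Finset.sum_range_succ']
          simp only [Nat.sub_zero]
          have h1 : ∑ j ∈ Finset.range u, S (m - (j + 1)) ≤ ∑ _j ∈ Finset.range u, 2 * S m := by
            apply Finset.sum_le_sum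
            intro j hj
            have hj' : j < u := Finset.mem_range.mp hj
            exact (hc (j + 1) (by omega) (by omega)).le
          have h2 : ∑ _j ∈ Finset.range u, (2 : ℝ) * S m = (u:ℝ) * (2 * S m) := by
            rw [Finset.sum_const, Finset.card_range, nsmul_eq_mul]
          linarith
        have hSm : 1 ≤ S m := hS1 m (by omega)
        have hcast : (2 * (u:ℝ) + 2) ≤ K := by rw [hK]; linarith
        have hint : (2 * (u:ℝ) + 2) * S m ≤ K * S m :=
          mul_le_mul_of_nonneg_right hcast (by linarith)
        nlinarith
      have hinv : ∀ m, N₁ ≤ m → S m * 2 ^ ((m - N₁) / u) ≤ B := by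
        intro m
        induction m using Nat.strong_induction_on with
        | _ m ih =>
          intro hm
          by_cases hcase : m < N₁ + u
          · have he : (m - N₁) / u = 0 := Nat.div_eq_of_lt (by omega)
            rw [he, pow_zero, mul_one]
            exact hBS m hm hcase
          · push_neg at hcase
            obtain ⟨j, hj1, hju, h2S⟩ := hchain m hcase
            have hexp : (m - N₁) / u ≤ (m - j - N₁) / u + 1 := by
              have h1 : m - N₁ ≤ (m - j - N₁) + u := by omega
              calc (m - N₁) / u ≤ ((m - j - N₁) + u) / u := Nat.div_le_div_right h1
                _ = (m - j - N₁) / u + 1 := Nat.add_div_right _ hu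
            have hIH := ih (m - j) (by omega) (by omega)
            have hp2 : (2:ℝ) ^ ((m - N₁) / u) ≤ 2 ^ ((m - j - N₁) / u + 1) :=
              pow_le_pow_right₀ (by norm_num) hexp
            calc S m * 2 ^ ((m - N₁) / u)
                ≤ S m * 2 ^ ((m - j - N₁) / u + 1) :=
                  mul_le_mul_of_nonneg_left hp2 (hS0 m)
              _ = (2 * S m) * 2 ^ ((m - j - N₁) / u) := by rw [pow_succ]; ring
              _ ≤ S (m - j) * 2 ^ ((m - j - N₁) / u) :=
                  mul_le_mul_of_nonneg_right h2S (by positivity)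
              _ ≤ B := hIH
      obtain ⟨k, hk⟩ := pow_unbounded_of_one_lt B (one_lt_two (α := ℝ))
      have hSm : 1 ≤ S (N₁ + u * k) := hS1 (N₁ + u * k) (by omega)
      have hI := hinv (N₁ + u * k) (by omega)
      rw [Nat.add_sub_cancel_left, Nat.mul_div_cancel_left k hu] at hI
      have hpk : (0:ℝ) < 2 ^ k := by positivity
      nlinarith
  -- forward propagation
  have hstep4 : ∀ m, N₀ ≤ m → S (m + 1) ≤ 4 * S m := by
    intro m hm
    have hsplit : S (m + 1) = (∑ j ∈ Finset.range u, a (m - j)) + a (m + 1) := by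
      rw [hSapp, Finset.sum_range_succ']
      simp [Nat.succ_sub_succ_eq_sub]
    have hsub : (∑ j ∈ Finset.range u, a (m - j)) ≤ S m := by
      rw [hSapp]
      apply Finset.sum_le_sum_of_subset_of_nonneg
      · exact Finset.range_subset_range.mpr (Nat.le_succ u)
      · intro j _ _; exact ha0 _
    have hdm := hd (m + 1) (by omega)
    simp only [Nat.add_sub_cancel] at hdm
    have h1 : a (m + 1) ≤ a m + ε₀ * S (m + 1) := by
      have := abs_le.mp hdm
      linarith [this.2]
    have h2 : a m ≤ S m := haS m
    have h3 : S (m + 1) ≤ 2 * S m + ε₀ * S (m + 1) := by linarith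
    nlinarith [hS0 (m + 1)]
  have hprop : ∀ n, N₁ ≤ n → S n ≤ K * a n →
      (∀ t, t ≤ u + 1 → S (n + t) ≤ 2 * C₁ * a (n + t)) ∧
        S (n + (u + 1)) ≤ K * a (n + (u + 1)) := by
    intro n hn hSn
    have han0 : 0 ≤ a n := ha0 n
    have hSt' : ∀ t, S (n + t) ≤ 4 ^ t * (K * a n) := by
      intro t
      induction t with
      | zero => simpa using hSn
      | succ t ih =>
        have h4 := hstep4 (n + t) (by omega)
        have : S (n + (t + 1)) = S ((n + t) + 1) := by rw [Nat.add_assoc]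
        rw [this]
        calc S ((n + t) + 1) ≤ 4 * S (n + t) := h4
          _ ≤ 4 * (4 ^ t * (K * a n)) := by linarith
          _ = 4 ^ (t + 1) * (K * a n) := by ring
    have hSt : ∀ t, t ≤ u + 1 → S (n + t) ≤ C₁ * a n := by
      intro t ht
      have h4t : (4:ℝ) ^ t ≤ 4 ^ (u + 1) := pow_le_pow_right₀ (by norm_num) ht
      have hKa : 0 ≤ K * a n := mul_nonneg hKpos.le han0
      calc S (n + t) ≤ 4 ^ t * (K * a n) := hSt' t
        _ ≤ 4 ^ (u + 1) * (K * a n) := mul_le_mul_of_nonneg_right h4t hKa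
        _ = C₁ * a n := by rw [hC₁]; ring
    have hat : ∀ t, t ≤ u + 1 → |a (n + t) - a n| ≤ (t : ℝ) * (ε₀ * C₁ * a n) := by
      intro t
      induction t with
      | zero => intro _; simp
      | succ t ih =>
        intro ht
        have ih' := ih (by omega)
        have hdm := hd (n + t + 1) (by omega)
        simp only [Nat.add_sub_cancel] at hdm
        have hS' : S (n + t + 1) ≤ C₁ * a n := by
          have := hSt (t + 1) ht
          rw [← Nat.add_assoc] at this
          exact this
        have htri : |a (n + t + 1) - a n| ≤ |a (n + t + 1) - a (n + t)| + |a (n + t) - a n| :=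
          abs_sub_le _ _ _
        have hm1 : ε₀ * S (n + t + 1) ≤ ε₀ * (C₁ * a n) :=
          mul_le_mul_of_nonneg_left hS' hε₀pos.le
        have heq : n + (t + 1) = n + t + 1 := by omega
        rw [heq]
        push_cast
        calc |a (n + t + 1) - a n|
            ≤ |a (n + t + 1) - a (n + t)| + |a (n + t) - a n| := htri
          _ ≤ ε₀ * (C₁ * a n) + (t : ℝ) * (ε₀ * C₁ * a n) := by linarith
          _ = ((t : ℝ) + 1) * (ε₀ * C₁ * a n) := by ring
    have habound : ∀ t, t ≤ u + 1 → a n / 2 ≤ a (n + t) ∧ a (n + t) ≤ 3 / 2 * a n := by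
      intro t ht
      have h1 := hat t ht
      have h2 : (t : ℝ) ≤ (u : ℝ) + 1 := by exact_mod_cast ht
      have h3 : (t : ℝ) * (ε₀ * C₁ * a n) ≤ a n / 2 := by
        have hm : (t : ℝ) * (ε₀ * C₁ * a n) ≤ ((u : ℝ) + 1) * (ε₀ * C₁ * a n) :=
          mul_le_mul_of_nonneg_right h2 (by positivity)
        have he : ((u : ℝ) + 1) * (ε₀ * C₁ * a n) = (((u : ℝ) + 1) * ε₀ * C₁) * a n := by ring
        rw [he, hhalf] at hm
        linarith
      have h4 := abs_le.mp h1
      constructor <;> linarith [h4.1, h4.2]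
    constructor
    · intro t ht
      have hb := habound t ht
      have hs := hSt t ht
      have hmul : C₁ * a n ≤ C₁ * (2 * a (n + t)) :=
        mul_le_mul_of_nonneg_left (by linarith [hb.1]) hC₁pos.le
      calc S (n + t) ≤ C₁ * a n := hs
        _ ≤ C₁ * (2 * a (n + t)) := hmul
        _ = 2 * C₁ * a (n + t) := by ring
    · have hb := habound (u + 1) le_rfl
      have hsum : S (n + (u + 1)) ≤ ((u : ℝ) + 1) * (3 / 2 * a n) := by
        rw [hSapp]
        have hle : ∀ j ∈ Finset.range (u + 1), a (n + (u + 1) - j) ≤ 3 / 2 * a n := by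
          intro j hj
          have hj' : j ≤ u := by simpa [Nat.lt_succ_iff] using hj
          have heq : n + (u + 1) - j = n + (u + 1 - j) := by omega
          rw [heq]
          exact (habound (u + 1 - j) (by omega)).2
        calc ∑ j ∈ Finset.range (u + 1), a (n + (u + 1) - j)
            ≤ ∑ _j ∈ Finset.range (u + 1), 3 / 2 * a n := Finset.sum_le_sum hle
          _ = ((u : ℝ) + 1) * (3 / 2 * a n) := by
              rw [Finset.sum_const, Finset.card_range, nsmul_eq_mul]; push_cast; ring
      have h2an : a n ≤ 2 * a (n + (u + 1)) := by linarith [hb.1]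
      have ha' : 0 ≤ a (n + (u + 1)) := ha0 _
      rw [hK]
      nlinarith [mul_le_mul_of_nonneg_left h2an (by positivity : (0:ℝ) ≤ (u:ℝ) + 1)]
  obtain ⟨n₀, hn₀N, hn₀⟩ := hbase
  have hiter : ∀ k, S (n₀ + k * (u + 1)) ≤ K * a (n₀ + k * (u + 1)) := by
    intro k
    induction k with
    | zero => simpa using hn₀
    | succ k ih =>
      have hge : N₁ ≤ n₀ + k * (u + 1) := le_trans hn₀N (Nat.le_add_right _ _)
      have h2 := (hprop (n₀ + k * (u + 1)) hge ih).2
      have heq : n₀ + (k + 1) * (u + 1) = n₀ + k * (u + 1) + (u + 1) := by ring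
      rw [heq]
      exact h2
  have hK'bound : ∀ m, n₀ ≤ m → S m ≤ 2 * C₁ * a m := by
    intro m hm
    have hdm := Nat.div_add_mod (m - n₀) (u + 1)
    set k := (m - n₀) / (u + 1) with hk
    set t := (m - n₀) % (u + 1) with ht
    have htlt : t < u + 1 := Nat.mod_lt _ (Nat.succ_pos u)
    have hmeq : m = n₀ + k * (u + 1) + t := by
      rw [Nat.add_assoc, Nat.mul_comm, hdm]
      omega
    have hge : N₁ ≤ n₀ + k * (u + 1) := le_trans hn₀N (Nat.le_add_right _ _)
    have := (hprop (n₀ + k * (u + 1)) hge (hiter k)).1 t (by omega)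
    rw [hmeq]
    exact this
  -- conclusion
  refine ⟨hpos, ?_⟩
  rw [Metric.tendsto_atTop]
  intro ε hε
  obtain ⟨M, hM⟩ := hconv (ε / (2 * (2 * C₁))) (by positivity)
  refine ⟨M + n₀ + P + 1, fun n hn => ?_⟩
  have h1 := hM n (by omega)
  have h2 := hK'bound n (by omega)
  have h3 : 1 ≤ a n := hP n (by omega)
  have hapos : (0:ℝ) < a n := by linarith
  rw [Real.dist_eq]
  have heq : a (n - 1) / a n - 1 = (a (n - 1) - a n) / a n := by
    field_simp
  rw [heq, abs_div, abs_of_pos hapos, div_lt_iff₀ hapos]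
  have h4 : |a (n - 1) - a n| = |a n - a (n - 1)| := abs_sub_comm _ _
  have h5 : ε / (2 * (2 * C₁)) * S n ≤ ε / (2 * (2 * C₁)) * (2 * C₁ * a n) :=
    mul_le_mul_of_nonneg_left h2 (by positivity)
  have h6 : ε / (2 * (2 * C₁)) * (2 * C₁ * a n) = ε / 2 * a n := by
    field_simp
  calc |a (n - 1) - a n| = |a n - a (n - 1)| := h4
    _ ≤ ε / (2 * (2 * C₁)) * S n := h1
    _ ≤ ε / 2 * a n := by rw [← h6]; exact h5
    _ < ε * a n := by nlinarith
end
end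

section
/- Let P(x) ∈ 𝔖 be written as P(x) = p₀(x) + ∑_{ℓ=1}^k x^{c_ℓ}·R_ℓ(x^{d_ℓ}) with each p₀(x) a polynomial with natural-number coefficients, each R_ℓ ∈ RTN1, and 0 ≤ c_ℓ < d_ℓ, and let d be a positive integer divisible by every d_ℓ (any positive integer if k = 0). Then P(x) can be expressed in the form P(x) = p₀(x) + ∑_{i∈I} x^{c_i}·S_i(x^d) where I is a finite index set and each summand x^{c_i}·S_i(x^d) belongs to 𝔔 (in particular each S_i ∈ RTN1 and 0 ≤ c_i < d). -/
open Filter Finset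

noncomputable section

/-- A polynomial with natural-number coefficients (as a coefficient sequence). -/
def IsNatPoly (p : ℕ → ℝ) : Prop := IsNatSeries p ∧ ∃ N, ∀ n, N ≤ n → p n = 0

/-- Coefficient sequence of `x^c · A(x)`. -/
def xPowMul (c : ℕ) (a : ℕ → ℝ) : ℕ → ℝ := fun n => if c ≤ n then a (n - c) else 0

/-- `𝔔`: nonzero power series of the form `x^c · R(x^d)` with `0 ≤ c < d`, `R ∈ RTN1`. -/
def InQ (q : ℕ → ℝ) : Prop :=
  q ≠ 0 ∧ ∃ (c d : ℕ) (r : ℕ → ℝ), c < d ∧ RTN1 r ∧ q = xPowMul c (substPow d r)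

/-- `𝔖`: nonzero power series with natural-number coefficients and zero constant term
expressible as `p₀(x) + ∑_{i=1}^k p_i(x) · R_i(x^{d_i})` with the `p_i ∈ ℕ[x]`,
`R_i ∈ RTN1` and `d_i ≥ 1`. -/
def InS (a : ℕ → ℝ) : Prop :=
  a ≠ 0 ∧ a 0 = 0 ∧ IsNatSeries a ∧
    ∃ (k : ℕ) (p : ℕ → (ℕ → ℝ)) (R : ℕ → (ℕ → ℝ)) (d : ℕ → ℕ),
      IsNatPoly (p 0) ∧
      (∀ i ∈ Finset.Icc 1 k, IsNatPoly (p i) ∧ RTN1 (R i) ∧ 1 ≤ d i) ∧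
      ∀ n, a n = p 0 n + ∑ i ∈ Finset.Icc 1 k, cauchy (p i) (substPow (d i) (R i)) n


lemma shift_ratio {r : ℕ → ℝ} (h : RT1 r) (t : ℕ) :
    Filter.Tendsto (fun n => r (n - t) / r n) Filter.atTop (nhds 1) := by
  induction t with
  | zero =>
    apply Filter.Tendsto.congr' _ tendsto_const_nhds
    filter_upwards [h.1] with n hn
    simp [div_self hn.ne']
  | succ t ih =>
    have hcomp : Tendsto (fun n : ℕ => r ((n - 1) - t) / r (n - 1)) atTop (nhds 1) :=
      ih.comp (tendsto_sub_atTop_nat 1)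
    have hmul := hcomp.mul h.2
    rw [mul_one] at hmul
    apply Filter.Tendsto.congr' _ hmul
    have hpos1 : ∀ᶠ n : ℕ in atTop, 0 < r (n - 1) :=
      (tendsto_sub_atTop_nat 1).eventually h.1
    filter_upwards [hpos1, eventually_ge_atTop (t + 1)] with n hn hge
    have : n - 1 - t = n - (t + 1) := by omega
    rw [this]
    field_simp

lemma section_RT1 {r : ℕ → ℝ} (h : RT1 r) (m j : ℕ) (hm : 1 ≤ m) :
    RT1 (fun n => r (m * n + j)) := by
  constructor
  · obtain ⟨N, hN⟩ := eventually_atTop.1 h.1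
    filter_upwards [eventually_ge_atTop N] with n hn
    exact hN _ (le_trans hn (le_trans (Nat.le_mul_of_pos_left n hm) (Nat.le_add_right _ _)))
  · have hAT : Tendsto (fun n : ℕ => m * n + j) atTop atTop := by
      apply tendsto_atTop_mono (fun n => ?_) tendsto_id
      calc (n : ℕ) = 1 * n := (one_mul n).symm
      _ ≤ m * n := Nat.mul_le_mul_right n hm
      _ ≤ m * n + j := Nat.le_add_right _ _
    have := (shift_ratio h m).comp hAT
    apply Filter.Tendsto.congr' _ this
    filter_upwards [eventually_ge_atTop 1] with n hn
    simp only [Function.comp]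
    obtain ⟨n', rfl⟩ : ∃ n', n = n' + 1 := ⟨n - 1, by omega⟩
    simp only [Nat.add_sub_cancel, Nat.mul_succ]
    congr 2
    omega

lemma decomp (r : ℕ → ℝ) (c e m : ℕ) (he : 0 < e) (hm : 0 < m) (n : ℕ) :
    xPowMul c (substPow e r) n
      = ∑ j ∈ Finset.range m,
          xPowMul (c + e * j) (substPow (e * m) (fun t => r (m * t + j))) n := by
  simp only [xPowMul, substPow]
  by_cases hc : c ≤ n
  · by_cases hdvd : e ∣ n - c
    · set q := (n - c) / e with hq
      have hqe : e * q = n - c := Nat.mul_div_cancel' hdvd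
      set j0 := q % m with hj0
      have hj0m : j0 < m := Nat.mod_lt _ hm
      have hqm := Nat.div_add_mod q m
      have h3 : e * j0 ≤ e * q := Nat.mul_le_mul_left e (Nat.mod_le q m)
      have h1 : c + e * j0 ≤ n := by omega
      rw [Finset.sum_eq_single j0]
      · have h4 : e * q - e * j0 = e * (q - j0) := (Nat.mul_sub e q j0).symm
        have h5 : e * (q - j0) = e * m * (q / m) := by
          have : q - j0 = m * (q / m) := by omega
          rw [this]; ring
        have h2 : n - (c + e * j0) = (e * m) * (q / m) := by omega
        rw [if_pos hc, if_pos hdvd, if_pos h1, h2, if_pos ⟨q / m, rfl⟩,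
          Nat.mul_div_cancel_left _ (Nat.mul_pos he hm)]
        congr 1
        omega
      · intro j hjm hne
        rw [Finset.mem_range] at hjm
        by_cases h1' : c + e * j ≤ n
        · rw [if_pos h1']
          have hejs : e * j ≤ n - c := by
            by_contra hcon
            push_neg at hcon
            omega
          by_cases h2' : (e * m) ∣ n - (c + e * j)
          · exfalso
            have hjq : j ≤ q := by
              have : e * j ≤ e * q := by omega
              exact Nat.le_of_mul_le_mul_left this he
            have hsub : n - (c + e * j) = e * (q - j) := by
              have h4 : e * q - e * j = e * (q - j) := (Nat.mul_sub e q j).symm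
              omega
            rw [hsub] at h2'
            rcases h2' with ⟨t, ht⟩
            rw [mul_assoc] at ht
            have hmt : q - j = m * t := Nat.eq_of_mul_eq_mul_left he ht
            apply hne
            have hqj : q = m * t + j := by omega
            rw [hj0, hqj, Nat.mul_add_mod, Nat.mod_eq_of_lt hjm]
          · rw [if_neg h2']
        · rw [if_neg h1']
      · intro h; exact absurd (Finset.mem_range.2 hj0m) h
    · rw [if_pos hc, if_neg hdvd]
      symm
      apply Finset.sum_eq_zero
      intro j hj
      by_cases h1 : c + e * j ≤ n
      · rw [if_pos h1]
        by_cases h2 : (e * m) ∣ n - (c + e * j)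
        · exfalso
          apply hdvd
          rcases h2 with ⟨t, ht⟩
          have : n - c = e * (m * t + j) := by
            rw [Nat.mul_add]
            rw [mul_assoc] at ht
            omega
          exact ⟨_, this⟩
        · rw [if_neg h2]
      · rw [if_neg h1]
  · rw [if_neg hc]
    symm
    apply Finset.sum_eq_zero
    intro j hj
    rw [if_neg (by omega)]

lemma xpm_ne_zero {S : ℕ → ℝ} (hS : RT1 S) (c d : ℕ) (hd : 1 ≤ d) :
    xPowMul c (substPow d S) ≠ 0 := by
  obtain ⟨N, hN⟩ := eventually_atTop.1 hS.1
  intro h0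
  have hval := congrFun h0 (c + d * N)
  simp only [xPowMul, substPow, Pi.zero_apply] at hval
  rw [if_pos (Nat.le_add_right _ _), Nat.add_sub_cancel_left,
    if_pos ⟨N, rfl⟩, Nat.mul_div_cancel_left _ (by omega)] at hval
  exact (hN N le_rfl).ne' hval

/-- Any representation of `P ∈ 𝔖` as a natural polynomial plus a sum of members of `𝔔`
can be re-expressed with a single common exponent `d` divisible by all the original
exponents, with each summand `x^{c_i}·S_i(x^d)` in `𝔔` (so `S_i ∈ RTN1` and `c_i < d`). -/
theorem common_exponent (P : ℕ → ℝ) (hP : InS P)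
    (p0 : ℕ → ℝ) (hp0 : IsNatPoly p0)
    (k : ℕ) (c e : ℕ → ℕ) (R : ℕ → (ℕ → ℝ))
    (hR : ∀ ℓ ∈ Finset.Icc 1 k, RTN1 (R ℓ) ∧ c ℓ < e ℓ)
    (hrep : ∀ n, P n = p0 n + ∑ ℓ ∈ Finset.Icc 1 k, xPowMul (c ℓ) (substPow (e ℓ) (R ℓ)) n)
    (d : ℕ) (hd : 1 ≤ d) (hdvd : ∀ ℓ ∈ Finset.Icc 1 k, e ℓ ∣ d) :
    ∃ (I : Finset ℕ) (c' : ℕ → ℕ) (S : ℕ → (ℕ → ℝ)),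
      (∀ i ∈ I, InQ (xPowMul (c' i) (substPow d (S i))) ∧ RTN1 (S i) ∧ c' i < d) ∧
      ∀ n, P n = p0 n + ∑ i ∈ I, xPowMul (c' i) (substPow d (S i)) n := by
  classical
  set m : ℕ → ℕ := fun ℓ => d / e ℓ with hm
  refine ⟨(Finset.Icc 1 k).biUnion (fun ℓ => (Finset.range (m ℓ)).image (Nat.pair ℓ)),
    fun i => c i.unpair.1 + e i.unpair.1 * i.unpair.2,
    fun i => fun t => R i.unpair.1 (m i.unpair.1 * t + i.unpair.2), ?_, ?_⟩
  · intro i hi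
    rw [Finset.mem_biUnion] at hi
    obtain ⟨ℓ, hℓ, hi⟩ := hi
    rw [Finset.mem_image] at hi
    obtain ⟨j, hj, rfl⟩ := hi
    rw [Finset.mem_range] at hj
    have he : 0 < e ℓ := lt_of_le_of_lt (Nat.zero_le _) (hR ℓ hℓ).2
    have hed : e ℓ ∣ d := hdvd ℓ hℓ
    have hmd : e ℓ * m ℓ = d := Nat.mul_div_cancel' hed
    have hmpos : 1 ≤ m ℓ := Nat.div_pos (Nat.le_of_dvd (by omega) hed) he
    simp only [Nat.unpair_pair]
    have hS : RTN1 (fun t => R ℓ (m ℓ * t + j)) :=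
      ⟨section_RT1 (hR ℓ hℓ).1.1 (m ℓ) j hmpos, fun t => (hR ℓ hℓ).1.2 _⟩
    have hclt : c ℓ + e ℓ * j < d := by
      have h1 : c ℓ + e ℓ * j < e ℓ * (j + 1) := by
        rw [Nat.mul_succ]
        have := (hR ℓ hℓ).2
        omega
      have h2 : e ℓ * (j + 1) ≤ e ℓ * m ℓ := Nat.mul_le_mul_left _ (by omega)
      omega
    exact ⟨⟨xpm_ne_zero hS.1 _ _ hd, _, d, _, hclt, hS, rfl⟩, hS, hclt⟩
  · intro n
    rw [hrep n]
    congr 1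
    rw [Finset.sum_biUnion]
    · apply Finset.sum_congr rfl
      intro ℓ hℓ
      rw [Finset.sum_image (by intro a _ b _ hab; have := congrArg Nat.unpair hab; simpa using this)]
      have he : 0 < e ℓ := lt_of_le_of_lt (Nat.zero_le _) (hR ℓ hℓ).2
      have hed : e ℓ ∣ d := hdvd ℓ hℓ
      have hmd : e ℓ * m ℓ = d := Nat.mul_div_cancel' hed
      have hmpos : 0 < m ℓ := Nat.div_pos (Nat.le_of_dvd (by omega) hed) he
      have hdec := decomp (R ℓ) (c ℓ) (e ℓ) (m ℓ) he hmpos n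
      rw [hmd] at hdec
      rw [hdec]
      apply Finset.sum_congr rfl
      intro j hj
      simp only [Nat.unpair_pair]
    · intro a ha b hb hab
      simp only [Finset.disjoint_left, Finset.mem_image, Finset.mem_range]
      rintro x ⟨j, hj, rfl⟩ ⟨j', hj', hx⟩
      exact hab (by
        have := congrArg (fun z => z.unpair.1) hx
        simpa using this.symm)
end
end

section
/- Let A(x) be a power series with natural-number coefficients, let m₁,…,m_k be positive integers with d = gcd(m₁,…,m_k), and suppose (1 + x + ⋯ + x^{m_i−1})·A(x) ∈ RTN1 for each i = 1,…,k. Then there exists a natural number u such that a(n) − a(n−d) = o(a(n) + a(n−1) + ⋯ + a(n−u)) as n → ∞. -/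
open Filter Finset

noncomputable section

/-!
With `b(n) = a(n) + ⋯ + a(n - m + 1)` the coefficients of `(1 + x + ⋯ + x^{m-1}) A(x)`, one has
`b(n) - b(n - 1) = a(n) - a(n - m)`, and `b ∈ RT1` makes this `o(b(n))`. Call a shift `s`
negligible if `a(n) - a(n - s)` is `o` of some window sum of `a`. Since `a ≥ 0`, a window sum
evaluated at `n - t` is bounded by a wider window sum at `n`, so negligible shifts are closed under
addition and subtraction by telescoping, hence under the Euclidean algorithm, hence under `gcd`.
-/

open Asymptotics Topology

def windowSum (a : ℕ → ℝ) (w n : ℕ) : ℝ := ∑ j ∈ range w, a (n - j)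

def NegligibleIncrement (a : ℕ → ℝ) (s : ℕ) : Prop :=
  ∃ w, (fun n => a n - a (n - s)) =o[atTop] windowSum a w

section Window

variable {a : ℕ → ℝ}

lemma windowSum_nonneg (ha : ∀ n, 0 ≤ a n) (w n : ℕ) : 0 ≤ windowSum a w n :=
  sum_nonneg fun _ _ => ha _

lemma windowSum_mono (ha : ∀ n, 0 ≤ a n) {w v : ℕ} (h : w ≤ v) (n : ℕ) :
    windowSum a w n ≤ windowSum a v n :=
  sum_le_sum_of_subset_of_nonneg (range_subset_range.2 h) fun _ _ _ => ha _

lemma windowSum_comp_sub_le (ha : ∀ n, 0 ≤ a n) (t w n : ℕ) :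
    windowSum a w (n - t) ≤ windowSum a (t + w) n := by
  rw [windowSum, windowSum, sum_range_add]
  simp only [Nat.sub_sub]
  exact le_add_of_nonneg_left (sum_nonneg fun _ _ => ha _)

lemma isBigO_windowSum_comp_sub (ha : ∀ n, 0 ≤ a n) {t w v : ℕ} (h : t + w ≤ v) :
    (fun n => windowSum a w (n - t)) =O[atTop] windowSum a v := by
  refine IsBigO.of_bound 1 (Eventually.of_forall fun n => ?_)
  rw [Real.norm_of_nonneg (windowSum_nonneg ha _ _),
    Real.norm_of_nonneg (windowSum_nonneg ha _ _), one_mul]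
  exact (windowSum_comp_sub_le ha t w n).trans (windowSum_mono ha h n)

lemma isLittleO_windowSum_comp_sub (ha : ∀ n, 0 ≤ a n) {f : ℕ → ℝ} {t w v : ℕ}
    (hf : f =o[atTop] windowSum a w) (h : t + w ≤ v) :
    (fun n => f (n - t)) =o[atTop] windowSum a v :=
  (hf.comp_tendsto (tendsto_sub_atTop_nat t)).trans_isBigO (isBigO_windowSum_comp_sub ha h)

lemma windowSum_sub_windowSum_pred (a : ℕ → ℝ) (w n : ℕ) :
    windowSum a w n - windowSum a w (n - 1) = a n - a (n - w) := by
  have h := (sum_range_succ (fun j => a (n - j)) w).symm.trans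
    (sum_range_succ' (fun j => a (n - j)) w)
  have hpred : windowSum a w (n - 1) = ∑ j ∈ range w, a (n - (j + 1)) :=
    sum_congr rfl fun j _ => by rw [Nat.sub_sub, Nat.add_comm]
  rw [Nat.sub_zero] at h
  rw [hpred, windowSum]
  linarith

lemma cauchy_indicator_eq_windowSum (a : ℕ → ℝ) {w n : ℕ} (h : w ≤ n + 1) :
    cauchy (fun j => if j < w then (1 : ℝ) else 0) a n = windowSum a w n := by
  simp only [cauchy, windowSum, ite_mul, one_mul, zero_mul, ← sum_filter]
  congr 1
  ext j
  simp only [mem_filter, mem_range]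
  omega

end Window

lemma RT1.isLittleO_sub_pred {r : ℕ → ℝ} (hr : RT1 r) :
    (fun n => r n - r (n - 1)) =o[atTop] r := by
  obtain ⟨hpos, hratio⟩ := hr
  refine (isLittleO_iff_tendsto' ?_).2 ?_
  · filter_upwards [hpos] with n hn hzero
    exact absurd hzero hn.ne'
  · have h := (tendsto_const_nhds (x := (1 : ℝ))).sub hratio
    rw [sub_self] at h
    refine h.congr' ?_
    filter_upwards [hpos] with n hn
    rw [sub_div, div_self hn.ne']

namespace NegligibleIncrement

variable {a : ℕ → ℝ}

lemma zero (a : ℕ → ℝ) : NegligibleIncrement a 0 :=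
  ⟨0, by simpa only [Nat.sub_zero, sub_self] using isLittleO_zero _ _⟩

lemma of_rt1 {w : ℕ} (h : RT1 (cauchy (fun j => if j < w then (1 : ℝ) else 0) a)) :
    NegligibleIncrement a w := by
  have hb : ∀ n, w ≤ n →
      cauchy (fun j => if j < w then (1 : ℝ) else 0) a n = windowSum a w n :=
    fun n hn => cauchy_indicator_eq_windowSum a (by omega)
  refine ⟨w, h.isLittleO_sub_pred.congr' ?_ ?_⟩
  · filter_upwards [eventually_ge_atTop (w + 1)] with n hn
    rw [hb n (by omega), hb (n - 1) (by omega), windowSum_sub_windowSum_pred]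
  · filter_upwards [eventually_ge_atTop w] with n hn
    exact hb n hn

variable (ha : ∀ n, 0 ≤ a n)
include ha

lemma add {s t : ℕ} (hs : NegligibleIncrement a s) (ht : NegligibleIncrement a t) :
    NegligibleIncrement a (s + t) := by
  obtain ⟨w₁, h₁⟩ := hs
  obtain ⟨w₂, h₂⟩ := ht
  refine ⟨max w₁ (s + w₂), ((isLittleO_windowSum_comp_sub ha h₁ (t := 0) (by omega)).add
    (isLittleO_windowSum_comp_sub ha h₂ le_sup_right)).congr_left fun n => ?_⟩
  simp only [Nat.sub_zero, Nat.sub_sub]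
  ring

lemma sub {s t : ℕ} (hst : s ≤ t) (hs : NegligibleIncrement a s)
    (ht : NegligibleIncrement a t) : NegligibleIncrement a (t - s) := by
  obtain ⟨w₁, h₁⟩ := hs
  obtain ⟨w₂, h₂⟩ := ht
  refine ⟨max w₂ (t - s + w₁), ((isLittleO_windowSum_comp_sub ha h₂ (t := 0) (by omega)).sub
    (isLittleO_windowSum_comp_sub ha h₁ le_sup_right)).congr_left fun n => ?_⟩
  simp only [Nat.sub_zero, Nat.sub_sub, Nat.sub_add_cancel hst]
  ring

lemma mul_left {s : ℕ} (hs : NegligibleIncrement a s) (c : ℕ) :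
    NegligibleIncrement a (c * s) := by
  induction c with
  | zero => simpa using zero a
  | succ c ih => simpa only [add_mul, one_mul] using add ha ih hs

lemma mod {s t : ℕ} (hs : NegligibleIncrement a s) (ht : NegligibleIncrement a t) :
    NegligibleIncrement a (t % s) := by
  rw [show t % s = t - t / s * s by have := Nat.mod_add_div' t s; omega]
  exact sub ha (Nat.div_mul_le_self t s) (mul_left ha hs _) ht

lemma gcd {s t : ℕ} (hs : NegligibleIncrement a s) (ht : NegligibleIncrement a t) :
    NegligibleIncrement a (Nat.gcd s t) := by
  induction s, t using Nat.gcd.induction with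
  | H0 t => simpa using ht
  | H1 s t _ ih =>
    rw [Nat.gcd_rec]
    exact ih (mod ha hs ht) hs

lemma finset_gcd {ι : Type*} (s : Finset ι) {m : ι → ℕ}
    (hm : ∀ i ∈ s, NegligibleIncrement a (m i)) : NegligibleIncrement a (s.gcd m) := by
  classical
  induction s using Finset.induction_on with
  | empty => simpa using zero a
  | insert i s _ ih =>
    rw [Finset.gcd_insert]
    exact gcd ha (hm i (mem_insert_self i s)) (ih fun j hj => hm j (mem_insert_of_mem hj))

end NegligibleIncrement

theorem gcd_little_o_general (a : ℕ → ℝ) (hnat : IsNatSeries a) (k : ℕ)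
    (m : Fin k → ℕ)
    (h : ∀ i, RTN1 (cauchy (fun j => if j < m i then (1 : ℝ) else 0) a)) :
    ∃ u : ℕ, Filter.Tendsto
      (fun n => (a n - a (n - Finset.univ.gcd m)) / ∑ j ∈ Finset.range (u + 1), a (n - j))
      Filter.atTop (nhds 0) := by
  have ha : ∀ n, 0 ≤ a n := fun n => by
    obtain ⟨c, hc⟩ := hnat n
    exact hc ▸ c.cast_nonneg
  obtain ⟨w, hw⟩ := NegligibleIncrement.finset_gcd ha univ fun i _ =>
    NegligibleIncrement.of_rt1 (h i).1
  exact ⟨w, (hw.trans_isBigO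
    (isBigO_windowSum_comp_sub ha (t := 0) (by omega))).tendsto_div_nhds_zero⟩

/-- If `(1 + x + ⋯ + x^{m_i-1})·A(x) ∈ RTN1` for `i = 1, …, k` and `d = gcd(m₁,…,m_k)`,
then `a(n) - a(n-d) = o(a(n) + ⋯ + a(n-u))` for a suitable `u`. -/
theorem gcd_little_o (a : ℕ → ℝ) (hnat : IsNatSeries a) (k : ℕ) (hk : 1 ≤ k)
    (m : Fin k → ℕ) (hm : ∀ i, 1 ≤ m i)
    (h : ∀ i, RTN1 (cauchy (fun j => if j < m i then (1 : ℝ) else 0) a)) :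
    ∃ u : ℕ, Filter.Tendsto
      (fun n => (a n - a (n - Finset.univ.gcd m)) / ∑ j ∈ Finset.range (u + 1), a (n - j))
      Filter.atTop (nhds 0) :=
  gcd_little_o_general a hnat k m h
end
end

section
/- Let A(x) be a power series with natural-number coefficients, let m₁,…,m_k be positive integers with gcd(m₁,…,m_k) = 1, and suppose (1 + x + ⋯ + x^{m_i−1})·A(x) ∈ RTN1 for each i = 1,…,k. Then A(x) ∈ RTN1. -/
open Filter Finset

noncomputable section

/-!
Write `bᵢ = (1 + x + ⋯ + x^{mᵢ-1}) A`, so that `a(n) - a(n - mᵢ) = bᵢ(n) - bᵢ(n - 1)`. Since the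
`bᵢ` are in `RT1` and dominate `a`, they are pairwise comparable, so `a(n) - a(n - mᵢ) = o(B(n))`
for the fixed reference `B = b₁`. The shifts `c` with `a(n) - a(n - c) = o(B(n))` are closed under
sums and differences, hence contain `gcd(m₁, …, m_k) = 1` and then every `c`. Summing over
`c < m₁` gives `m₁ a(n) - B(n) = o(B(n))`, i.e. `a(n) / B(n) → 1 / m₁`, and `a ∈ RT1` follows
from `B ∈ RT1`.
-/

open Asymptotics Topology

def geomSumCoeff (m : ℕ) : ℕ → ℝ := fun j => if j < m then 1 else 0

namespace RT1

variable {r : ℕ → ℝ}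

theorem tendsto_shift_div (hr : RT1 r) (t : ℕ) :
    Tendsto (fun n => r (n - t) / r n) atTop (𝓝 1) := by
  induction t with
  | zero =>
    refine tendsto_const_nhds.congr' ?_
    filter_upwards [hr.1] with n hn
    simp [hn.ne']
  | succ t ih =>
    have := (ih.comp (tendsto_sub_atTop_nat 1)).mul hr.2
    rw [mul_one] at this
    refine this.congr' ?_
    filter_upwards [(tendsto_sub_atTop_nat 1).eventually hr.1] with n hn
    simp only [Function.comp_apply, Nat.sub_sub, add_comm 1 t]
    field_simp

theorem isBigO_shift (hr : RT1 r) (t : ℕ) : (fun n => r (n - t)) =O[atTop] r :=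
  isBigO_of_div_tendsto_nhds (hr.1.mono fun _ hn h0 => absurd h0 hn.ne') 1
    (hr.tendsto_shift_div t)

theorem isLittleO_sub_pred_s16 (hr : RT1 r) : (fun n => r n - r (n - 1)) =o[atTop] r := by
  rw [isLittleO_iff_tendsto' (hr.1.mono fun _ hn h0 => absurd h0 hn.ne')]
  have := (tendsto_const_nhds (x := (1 : ℝ))).sub hr.2
  rw [sub_self] at this
  refine this.congr' ?_
  filter_upwards [hr.1] with n hn
  rw [sub_div, div_self hn.ne']

theorem of_tendsto_div {a : ℕ → ℝ} (hr : RT1 r) {c : ℝ} (hc : 0 < c)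
    (h : Tendsto (fun n => a n / r n) atTop (𝓝 c)) : RT1 a := by
  have hpos : ∀ᶠ n in atTop, 0 < a n := by
    filter_upwards [h.eventually (eventually_gt_nhds hc), hr.1] with n h1 h2
    exact (div_pos_iff_of_pos_right h2).1 h1
  refine ⟨hpos, ?_⟩
  have := ((h.comp (tendsto_sub_atTop_nat 1)).mul hr.2).div h hc.ne'
  rw [mul_one, div_self hc.ne'] at this
  refine this.congr' ?_
  filter_upwards [hpos, hr.1, (tendsto_sub_atTop_nat 1).eventually hr.1] with n h1 h2 h3
  simp only [Pi.div_apply, Function.comp_apply]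
  field_simp

end RT1

section geomSum

variable {a : ℕ → ℝ} {m n : ℕ}

theorem cauchy_geomSumCoeff_of_le (hn : m ≤ n + 1) :
    cauchy (geomSumCoeff m) a n = ∑ t ∈ range m, a (n - t) := by
  unfold cauchy geomSumCoeff
  simp only [ite_mul, one_mul, zero_mul]
  rw [← sum_filter]
  congr 1
  ext j
  simp only [mem_filter, mem_range]
  omega

theorem cauchy_geomSumCoeff_sub_pred (hn : m ≤ n) :
    cauchy (geomSumCoeff m) a n - cauchy (geomSumCoeff m) a (n - 1) = a n - a (n - m) := by
  rw [cauchy_geomSumCoeff_of_le (by omega), cauchy_geomSumCoeff_of_le (by omega),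
    ← sum_sub_distrib]
  simp only [Nat.sub_sub, add_comm 1]
  exact sum_range_sub' (fun t => a (n - t)) m

theorem pos_of_RT1_cauchy_geomSumCoeff (h : RT1 (cauchy (geomSumCoeff m) a)) : 0 < m := by
  by_contra! hm
  obtain ⟨n, hn⟩ := h.1.exists
  simp [cauchy, geomSumCoeff, Nat.le_zero.1 hm] at hn

theorem le_cauchy_geomSumCoeff (ha : ∀ n, 0 ≤ a n) (hm : 0 < m) (n : ℕ) :
    a n ≤ cauchy (geomSumCoeff m) a n := by
  have := single_le_sum (f := fun j => geomSumCoeff m j * a (n - j))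
    (fun j _ => mul_nonneg (by unfold geomSumCoeff; split <;> norm_num) (ha _))
    (mem_range.2 n.succ_pos)
  simpa [cauchy, geomSumCoeff, hm] using this

theorem isBigO_cauchy_geomSumCoeff (ha : ∀ n, 0 ≤ a n) {m' : ℕ}
    (hb : RT1 (cauchy (geomSumCoeff m') a)) (m : ℕ) :
    cauchy (geomSumCoeff m) a =O[atTop] cauchy (geomSumCoeff m') a := by
  have hab : a =O[atTop] cauchy (geomSumCoeff m') a := by
    refine isBigO_of_le _ fun n => ?_
    have := le_cauchy_geomSumCoeff ha (pos_of_RT1_cauchy_geomSumCoeff hb) n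
    rwa [Real.norm_of_nonneg (ha n), Real.norm_of_nonneg ((ha n).trans this)]
  have hsum : (∑ t ∈ range m, fun n => a (n - t)) =O[atTop] cauchy (geomSumCoeff m') a :=
    IsBigO.sum fun t _ => (hab.comp_tendsto (tendsto_sub_atTop_nat t)).trans (hb.isBigO_shift t)
  refine hsum.congr' ?_ EventuallyEq.rfl
  filter_upwards [eventually_ge_atTop m] with n hn
  rw [Finset.sum_apply, cauchy_geomSumCoeff_of_le (by omega)]

theorem tendsto_div_cauchy_geomSumCoeff (hb : RT1 (cauchy (geomSumCoeff m) a))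
    (h : ∀ t, (fun n => a n - a (n - t)) =o[atTop] cauchy (geomSumCoeff m) a) :
    Tendsto (fun n => a n / cauchy (geomSumCoeff m) a n) atTop (𝓝 (1 / m)) := by
  have hm : (m : ℝ) ≠ 0 := by exact_mod_cast (pos_of_RT1_cauchy_geomSumCoeff hb).ne'
  have hsum : (fun n => m * a n - cauchy (geomSumCoeff m) a n) =o[atTop]
      cauchy (geomSumCoeff m) a := by
    refine (IsLittleO.sum fun t (_ : t ∈ range m) => h t).congr' ?_ EventuallyEq.rfl
    filter_upwards [eventually_ge_atTop m] with n hn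
    rw [Finset.sum_apply, sum_sub_distrib, sum_const, card_range, nsmul_eq_mul,
      cauchy_geomSumCoeff_of_le (by omega)]
  have := (hsum.tendsto_div_nhds_zero.add_const 1).div_const (m : ℝ)
  rw [zero_add] at this
  refine this.congr' ?_
  filter_upwards [hb.1] with n hn
  field_simp
  ring

end geomSum

section shiftDiff

variable {a B : ℕ → ℝ}

theorem isLittleO_shift_diff_add (hB : RT1 B) {c d : ℕ}
    (hc : (fun n => a n - a (n - c)) =o[atTop] B) (hd : (fun n => a n - a (n - d)) =o[atTop] B) :
    (fun n => a n - a (n - (c + d))) =o[atTop] B := by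
  have hd' := (hd.comp_tendsto (tendsto_sub_atTop_nat c)).trans_isBigO (hB.isBigO_shift c)
  refine (hc.add hd').congr_left fun n => ?_
  simp only [Function.comp_apply, Nat.sub_sub]
  ring

theorem isLittleO_shift_diff_sub (hB : RT1 B) {p q : ℕ}
    (hp : (fun n => a n - a (n - p)) =o[atTop] B) (hq : (fun n => a n - a (n - q)) =o[atTop] B) :
    (fun n => a n - a (n - (p - q))) =o[atTop] B := by
  rcases le_or_gt q p with hqp | hpq
  · have hq' := (hq.comp_tendsto (tendsto_sub_atTop_nat (p - q))).trans_isBigO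
      (hB.isBigO_shift (p - q))
    refine (hp.sub hq').congr' ?_ EventuallyEq.rfl
    filter_upwards with n
    simp only [Function.comp_apply, Nat.sub_sub, Nat.sub_add_cancel hqp]
    ring
  · simp [Nat.sub_eq_zero_of_le hpq.le]

end shiftDiff

theorem Nat.gcd_mem_of_sub_mem {S : Set ℕ} (hS : ∀ p ∈ S, ∀ q ∈ S, p - q ∈ S) {x y : ℕ}
    (hx : x ∈ S) (hy : y ∈ S) : Nat.gcd x y ∈ S := by
  induction x, y using Nat.gcd.induction with
  | H0 y => simpa using hy
  | H1 x y _ ih =>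
    have hsub_mul : ∀ k, y - x * k ∈ S := fun k => by
      induction k with
      | zero => simpa using hy
      | succ k ihk => rw [Nat.mul_succ, ← Nat.sub_sub]; exact hS _ ihk _ hx
    rw [Nat.gcd_rec]
    exact ih (Nat.mod_eq_sub_mul_div ▸ hsub_mul _) hx

theorem Finset.gcd_mem_of_sub_mem {ι : Type*} {S : Set ℕ} (hS : ∀ p ∈ S, ∀ q ∈ S, p - q ∈ S)
    (h0 : 0 ∈ S) (s : Finset ι) {m : ι → ℕ} (hm : ∀ i ∈ s, m i ∈ S) : s.gcd m ∈ S := by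
  classical
  induction s using Finset.induction_on with
  | empty => simpa using h0
  | insert i s _ ih =>
    rw [gcd_insert]
    exact Nat.gcd_mem_of_sub_mem hS (hm i (mem_insert_self i s))
      (ih fun j hj => hm j (mem_insert_of_mem hj))

theorem RT1.of_RT1_cauchy_geomSumCoeff {ι : Type*} {a : ℕ → ℝ} (ha : ∀ n, 0 ≤ a n)
    {s : Finset ι} {m : ι → ℕ} (hgcd : s.gcd m = 1)
    (h : ∀ i ∈ s, RT1 (cauchy (geomSumCoeff (m i)) a)) : RT1 a := by
  obtain ⟨i₀, hi₀⟩ : s.Nonempty := nonempty_iff_ne_empty.2 fun hs => by simp [hs] at hgcd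
  set B := cauchy (geomSumCoeff (m i₀)) a
  have hB : RT1 B := h i₀ hi₀
  set S : Set ℕ := {c | (fun n => a n - a (n - c)) =o[atTop] B}
  have hsub : ∀ p ∈ S, ∀ q ∈ S, p - q ∈ S := fun _ hp _ hq => isLittleO_shift_diff_sub hB hp hq
  have hmS : ∀ i ∈ s, m i ∈ S := fun i hi => by
    refine ((h i hi).isLittleO_sub_pred_s16.trans_isBigO
      (isBigO_cauchy_geomSumCoeff ha hB _)).congr' ?_ EventuallyEq.rfl
    filter_upwards [eventually_ge_atTop (m i)] with n hn
    exact cauchy_geomSumCoeff_sub_pred hn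
  have h0 : 0 ∈ S := by simpa using hsub _ (hmS i₀ hi₀) _ (hmS i₀ hi₀)
  have h1 : 1 ∈ S := hgcd ▸ s.gcd_mem_of_sub_mem hsub h0 hmS
  have hall : ∀ t, t ∈ S := fun t => by
    induction t with
    | zero => exact h0
    | succ t ih => exact isLittleO_shift_diff_add hB ih h1
  have hm₀ : (0 : ℝ) < 1 / m i₀ := by
    have := pos_of_RT1_cauchy_geomSumCoeff hB
    positivity
  exact hB.of_tendsto_div hm₀ (tendsto_div_cauchy_geomSumCoeff hB hall)

theorem gcd_one_RTN1_general (a : ℕ → ℝ) (hnat : IsNatSeries a) (k : ℕ)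
    (m : Fin k → ℕ) (hgcd : Finset.univ.gcd m = 1)
    (h : ∀ i, RTN1 (cauchy (fun j => if j < m i then (1 : ℝ) else 0) a)) :
    RTN1 a := by
  have ha : ∀ n, 0 ≤ a n := fun n => by
    obtain ⟨c, hc⟩ := hnat n
    exact hc ▸ c.cast_nonneg
  exact ⟨RT1.of_RT1_cauchy_geomSumCoeff ha hgcd fun i _ => (h i).1, hnat⟩

/-- If `(1 + x + ⋯ + x^{m_i-1})·A(x) ∈ RTN1` for `i = 1, …, k` and `gcd(m₁,…,m_k) = 1`,
then `A ∈ RTN1`. -/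
theorem gcd_one_RTN1 (a : ℕ → ℝ) (hnat : IsNatSeries a) (k : ℕ) (hk : 1 ≤ k)
    (m : Fin k → ℕ) (hm : ∀ i, 1 ≤ m i) (hgcd : Finset.univ.gcd m = 1)
    (h : ∀ i, RTN1 (cauchy (fun j => if j < m i then (1 : ℝ) else 0) a)) :
    RTN1 a :=
  gcd_one_RTN1_general a hnat k m hgcd h
end
end
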